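/- arXiv:2511.22654 — 7 statements merged into one kernel-verified Lean document; each statement's English description precedes it below -/
import Mathlib

section
/- For every integer k ≥ 1 and every unit vector ψ ∈ ℂⁿ, the expectation value ⟨(|0⟩⊗ψ), C^{2k} (|0⟩⊗ψ)⟩ equals Σ_{l=1}^{n} |α_l|² cos(2k θ_l), which in turn equals Σ_{l=1}^{n} |α_l|² T_{4k}(λ_l). (This is the paper's Theorem 1: the k-th order OTOC is the 2k-th Fourier moment, equivalently the 4k-th Chebyshev moment, of the singular-value phase distribution of the truncated propagator A.) -/
/-!
The echo operator `C = (U* Z U) Z` is a product of two reflections. For a singular pair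
`A φ = λ ψ`, `A* ψ = λ φ` with `λ = cos (θ/2)`, put `e = |0⟩ ⊗ φ` and `f = U* (|0⟩ ⊗ ψ)`. Since
`Z = 2 |0⟩⟨0| ⊗ I - 1`, the reflection `Z` fixes `e` and sends `f` to `2λ e - f`, while `U* Z U`
fixes `f` and sends `e` to `2λ f - e`. So `C` acts on the plane spanned by `e` and `f` as the
rotation by `θ`, and `⟨e, C^m e⟩ = cos (mθ)`. The planes of different singular pairs are
orthogonal, so `|0⟩ ⊗ ψ = Σ α_l e_l` gives `Σ |α_l|² cos (mθ_l)`, and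
`T_{4k} (cos (θ/2)) = cos (2kθ)`.
-/

open Matrix Finset

theorem cos_sin_add_of_half_angle_coeffs {t x p q : ℝ}
    (hcos : p + Real.cos (t / 2) * q = Real.cos x) (hsin : Real.sin (t / 2) * q = Real.sin x) :
    (-p - 2 * Real.cos (t / 2) * q)
        + Real.cos (t / 2) * (2 * Real.cos (t / 2) * p + (4 * Real.cos (t / 2) ^ 2 - 1) * q)
      = Real.cos (x + t)
    ∧ Real.sin (t / 2) * (2 * Real.cos (t / 2) * p + (4 * Real.cos (t / 2) ^ 2 - 1) * q)
      = Real.sin (x + t) := by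
  have hcos_t : Real.cos t = 2 * Real.cos (t / 2) ^ 2 - 1 := by
    rw [← Real.cos_two_mul]; ring_nf
  have hsin_t : Real.sin t = 2 * Real.sin (t / 2) * Real.cos (t / 2) := by
    rw [← Real.sin_two_mul]; ring_nf
  have hpyth := Real.sin_sq_add_cos_sq (t / 2)
  rw [Real.cos_add, Real.sin_add, hcos_t, hsin_t, ← hcos, ← hsin]
  constructor
  · linear_combination 2 * Real.cos (t / 2) * q * hpyth
  · ring

section Reflections

variable {ι : Type*} [Fintype ι] {R₁ R₂ : Matrix ι ι ℂ} {e f : ι → ℂ} {c : ℂ}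

theorem mul_mulVec_smul_add_smul (hR₁e : R₁ *ᵥ e = (2 * c) • f - e) (hR₁f : R₁ *ᵥ f = f)
    (hR₂e : R₂ *ᵥ e = e) (hR₂f : R₂ *ᵥ f = (2 * c) • e - f) (p q : ℂ) :
    (R₁ * R₂) *ᵥ (p • e + q • f)
      = (-p - 2 * c * q) • e + (2 * c * p + (4 * c ^ 2 - 1) * q) • f := by
  rw [← mulVec_mulVec, mulVec_add, mulVec_smul, mulVec_smul, hR₂e, hR₂f, mulVec_add,
    mulVec_smul, mulVec_smul, mulVec_sub, mulVec_smul, hR₁e, hR₁f]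
  module

theorem exists_pow_mul_mulVec_eq [DecidableEq ι] {t : ℝ}
    (hR₁e : R₁ *ᵥ e = (2 * Real.cos (t / 2) : ℂ) • f - e) (hR₁f : R₁ *ᵥ f = f)
    (hR₂e : R₂ *ᵥ e = e) (hR₂f : R₂ *ᵥ f = (2 * Real.cos (t / 2) : ℂ) • e - f) (m : ℕ) :
    ∃ p q : ℝ, (R₁ * R₂) ^ m *ᵥ e = (p : ℂ) • e + (q : ℂ) • f
      ∧ p + Real.cos (t / 2) * q = Real.cos (m * t) ∧ Real.sin (t / 2) * q = Real.sin (m * t) := by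
  induction m with
  | zero => exact ⟨1, 0, by simp⟩
  | succ m ih =>
    obtain ⟨p, q, hpow, hcos, hsin⟩ := ih
    obtain ⟨hcos', hsin'⟩ := cos_sin_add_of_half_angle_coeffs hcos hsin
    refine ⟨_, _, ?_, by push_cast; rw [add_one_mul]; exact hcos',
      by push_cast; rw [add_one_mul]; exact hsin'⟩
    rw [pow_succ', ← mulVec_mulVec, hpow, mul_mulVec_smul_add_smul hR₁e hR₁f hR₂e hR₂f]
    push_cast
    rfl

theorem star_dotProduct_pow_mul_mulVec [DecidableEq ι] {t : ℝ}
    (hR₁e : R₁ *ᵥ e = (2 * Real.cos (t / 2) : ℂ) • f - e) (hR₁f : R₁ *ᵥ f = f)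
    (hR₂e : R₂ *ᵥ e = e) (hR₂f : R₂ *ᵥ f = (2 * Real.cos (t / 2) : ℂ) • e - f)
    {g : ι → ℂ} (hgf : star g ⬝ᵥ f = Real.cos (t / 2) * (star g ⬝ᵥ e)) (m : ℕ) :
    star g ⬝ᵥ ((R₁ * R₂) ^ m *ᵥ e) = Real.cos (m * t) * (star g ⬝ᵥ e) := by
  obtain ⟨p, q, hpow, hcos, -⟩ := exists_pow_mul_mulVec_eq hR₁e hR₁f hR₂e hR₂f m
  rw [hpow, dotProduct_add, dotProduct_smul, dotProduct_smul, hgf, ← hcos]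
  push_cast
  simp only [smul_eq_mul]
  ring

end Reflections

section Expansion

variable {ι κ : Type*} [Fintype ι] [Fintype κ]

theorem eq_sum_dotProduct_smul_of_orthonormal [DecidableEq ι] {b : ι → ι → ℂ}
    (hb : ∀ l l', star (b l) ⬝ᵥ b l' = if l = l' then 1 else 0) (x : ι → ℂ) :
    x = ∑ l, (star (b l) ⬝ᵥ x) • b l := by
  set Φ : Matrix ι ι ℂ := (Matrix.of b)ᵀ
  have hΦ : Φᴴ * Φ = 1 := by
    ext l l'
    simpa [Φ, mul_apply, one_apply, dotProduct] using hb l l'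
  calc x = (Φ * Φᴴ) *ᵥ x := by rw [mul_eq_one_comm.mp hΦ, one_mulVec]
    _ = Φ *ᵥ (Φᴴ *ᵥ x) := (mulVec_mulVec _ _ _).symm
    _ = ∑ l, (star (b l) ⬝ᵥ x) • b l := by
      ext a
      simp [Φ, mulVec, dotProduct, Finset.sum_apply, mul_comm]

theorem star_sum_smul_dotProduct_mulVec_sum_smul [DecidableEq κ] (T : Matrix ι ι ℂ)
    {e : κ → ι → ℂ} {μ : κ → ℂ}
    (hT : ∀ l l', star (e l) ⬝ᵥ (T *ᵥ e l') = if l = l' then μ l else 0) (α : κ → ℂ) :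
    star (∑ l, α l • e l) ⬝ᵥ (T *ᵥ ∑ l, α l • e l) = ∑ l, (‖α l‖ ^ 2 : ℝ) * μ l := by
  simp only [star_sum, star_smul, sum_dotProduct, mulVec_sum, mulVec_smul, dotProduct_sum,
    smul_dotProduct, dotProduct_smul, hT, smul_eq_mul, mul_ite, mul_zero, Finset.sum_ite_eq',
    Finset.mem_univ, if_true]
  refine Finset.sum_congr rfl fun l _ => ?_
  rw [← mul_assoc, mul_comm (α l), Complex.ofReal_pow, ← Complex.conj_mul']
  rfl

end Expansion

section QubitRegister

variable {ι : Type*}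

def ketZero : (ι → ℂ) →ₗ[ℂ] (Fin 2 × ι → ℂ) where
  toFun x p := if p.1 = 0 then x p.2 else 0
  map_add' x y := by ext p; split_ifs <;> simp [*]
  map_smul' c x := by ext p; split_ifs <;> simp [*]

/-- `z ↦ (⟨0| ⊗ I) z`. -/
def braZero (z : Fin 2 × ι → ℂ) : ι → ℂ := fun a => z (0, a)

def pauliZKronOne (ι : Type*) [DecidableEq ι] : Matrix (Fin 2 × ι) (Fin 2 × ι) ℂ :=
  diagonal fun p => if p.1 = 0 then 1 else -1

/-- The block `(⟨0| ⊗ I) M (|0⟩ ⊗ I)`. -/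
def topBlock (M : Matrix (Fin 2 × ι) (Fin 2 × ι) ℂ) : Matrix ι ι ℂ :=
  M.submatrix (Prod.mk 0) (Prod.mk 0)

theorem topBlock_conjTranspose (M : Matrix (Fin 2 × ι) (Fin 2 × ι) ℂ) :
    topBlock Mᴴ = (topBlock M)ᴴ :=
  (conjTranspose_submatrix _ _ _).symm

theorem braZero_ketZero (x : ι → ℂ) : braZero (ketZero x) = x := rfl

theorem braZero_star (z : Fin 2 × ι → ℂ) : braZero (star z) = star (braZero z) := rfl

variable [Fintype ι]

theorem ketZero_dotProduct (x : ι → ℂ) (z : Fin 2 × ι → ℂ) :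
    ketZero x ⬝ᵥ z = x ⬝ᵥ braZero z := by
  simp [ketZero, braZero, dotProduct, Fintype.sum_prod_type]

theorem dotProduct_ketZero (z : Fin 2 × ι → ℂ) (y : ι → ℂ) :
    z ⬝ᵥ ketZero y = braZero z ⬝ᵥ y := by
  rw [dotProduct_comm, ketZero_dotProduct, dotProduct_comm]

theorem star_ketZero_dotProduct_ketZero (x y : ι → ℂ) :
    star (ketZero x) ⬝ᵥ ketZero y = star x ⬝ᵥ y := by
  rw [dotProduct_ketZero, braZero_star, braZero_ketZero]

theorem braZero_mulVec_ketZero (M : Matrix (Fin 2 × ι) (Fin 2 × ι) ℂ) (x : ι → ℂ) :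
    braZero (M *ᵥ ketZero x) = topBlock M *ᵥ x := by
  ext a
  simp [ketZero, braZero, topBlock, mulVec, dotProduct, Fintype.sum_prod_type]

theorem star_ketZero_dotProduct_conjTranspose_mulVec_ketZero (M : Matrix (Fin 2 × ι) (Fin 2 × ι) ℂ)
    (x y : ι → ℂ) :
    star (ketZero x) ⬝ᵥ (Mᴴ *ᵥ ketZero y) = star (topBlock M *ᵥ x) ⬝ᵥ y := by
  rw [dotProduct_mulVec, ← star_mulVec, dotProduct_ketZero, braZero_star, braZero_mulVec_ketZero]

variable [DecidableEq ι]

theorem pauliZKronOne_mulVec (z : Fin 2 × ι → ℂ) :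
    pauliZKronOne ι *ᵥ z = (2 : ℂ) • ketZero (braZero z) - z := by
  ext ⟨i, a⟩
  fin_cases i
  · simp [pauliZKronOne, mulVec_diagonal, ketZero, braZero]
    ring
  · simp [pauliZKronOne, mulVec_diagonal, ketZero, braZero]

theorem pauliZKronOne_mulVec_ketZero (x : ι → ℂ) : pauliZKronOne ι *ᵥ ketZero x = ketZero x := by
  rw [pauliZKronOne_mulVec, braZero_ketZero]
  module

end QubitRegister

section Echo

variable {ι : Type*} [Fintype ι] [DecidableEq ι] {U : Matrix (Fin 2 × ι) (Fin 2 × ι) ℂ}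

/-- The reflection `U* (Z ⊗ I) U`; the echo operator is `conjPauliZ U * pauliZKronOne ι`. -/
def conjPauliZ (U : Matrix (Fin 2 × ι) (Fin 2 × ι) ℂ) : Matrix (Fin 2 × ι) (Fin 2 × ι) ℂ :=
  Uᴴ * pauliZKronOne ι * U

theorem conjPauliZ_mulVec_ketZero (hU : U ∈ unitaryGroup (Fin 2 × ι) ℂ) {φ ψ : ι → ℂ} {c : ℂ}
    (hφ : topBlock U *ᵥ φ = c • ψ) :
    conjPauliZ U *ᵥ ketZero φ = (2 * c) • (Uᴴ *ᵥ ketZero ψ) - ketZero φ := by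
  have hUU : Uᴴ * U = 1 := mem_unitaryGroup_iff'.mp hU
  rw [conjPauliZ, ← mulVec_mulVec, ← mulVec_mulVec, pauliZKronOne_mulVec, braZero_mulVec_ketZero,
    hφ, mulVec_sub, mulVec_mulVec, hUU, one_mulVec, map_smul, mulVec_smul, mulVec_smul, smul_smul]

theorem conjPauliZ_mulVec_conjTranspose_mulVec_ketZero (hU : U ∈ unitaryGroup (Fin 2 × ι) ℂ)
    (ψ : ι → ℂ) : conjPauliZ U *ᵥ (Uᴴ *ᵥ ketZero ψ) = Uᴴ *ᵥ ketZero ψ := by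
  have hUU : U * Uᴴ = 1 := mem_unitaryGroup_iff.mp hU
  rw [conjPauliZ, mulVec_mulVec, Matrix.mul_assoc, hUU, Matrix.mul_one,
    ← mulVec_mulVec, pauliZKronOne_mulVec_ketZero]

theorem pauliZKronOne_mulVec_conjTranspose_mulVec_ketZero {φ ψ : ι → ℂ} {c : ℂ}
    (hψ : (topBlock U)ᴴ *ᵥ ψ = c • φ) :
    pauliZKronOne ι *ᵥ (Uᴴ *ᵥ ketZero ψ) = (2 * c) • ketZero φ - Uᴴ *ᵥ ketZero ψ := by
  rw [pauliZKronOne_mulVec, braZero_mulVec_ketZero, topBlock_conjTranspose, hψ, map_smul,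
    smul_smul]

theorem star_ketZero_dotProduct_echo_pow_mulVec_ketZero {κ : Type*} [DecidableEq κ]
    (hU : U ∈ unitaryGroup (Fin 2 × ι) ℂ) {φ ψ : κ → ι → ℂ}
    (hφ : ∀ l l', star (φ l) ⬝ᵥ φ l' = if l = l' then 1 else 0)
    (hψ : ∀ l l', star (ψ l) ⬝ᵥ ψ l' = if l = l' then 1 else 0) {θ : κ → ℝ}
    (hAφ : ∀ l, topBlock U *ᵥ φ l = (Real.cos (θ l / 2) : ℂ) • ψ l)
    (hAψ : ∀ l, (topBlock U)ᴴ *ᵥ ψ l = (Real.cos (θ l / 2) : ℂ) • φ l) (m : ℕ) (l l' : κ) :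
    star (ketZero (φ l)) ⬝ᵥ ((conjPauliZ U * pauliZKronOne ι) ^ m *ᵥ ketZero (φ l'))
      = if l = l' then (Real.cos (m * θ l) : ℂ) else 0 := by
  have hcoupling : star (ketZero (φ l)) ⬝ᵥ (Uᴴ *ᵥ ketZero (ψ l'))
      = Real.cos (θ l' / 2) * (star (ketZero (φ l)) ⬝ᵥ ketZero (φ l')) := by
    rw [star_ketZero_dotProduct_conjTranspose_mulVec_ketZero, star_ketZero_dotProduct_ketZero,
      hAφ, star_smul, smul_dotProduct, hψ, hφ, Complex.star_def, Complex.conj_ofReal]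
    split_ifs with h
    · subst h; rfl
    · simp
  rw [star_dotProduct_pow_mul_mulVec (conjPauliZ_mulVec_ketZero hU (hAφ l'))
    (conjPauliZ_mulVec_conjTranspose_mulVec_ketZero hU _) (pauliZKronOne_mulVec_ketZero _)
    (pauliZKronOne_mulVec_conjTranspose_mulVec_ketZero (hAψ l')) hcoupling m]
  rw [star_ketZero_dotProduct_ketZero, hφ]
  split_ifs with h
  · subst h; simp
  · simp

end Echo

theorem otoc_chebyshev_transform_general
    (n : ℕ)
    (Ut : Matrix (Fin 2 × Fin n) (Fin 2 × Fin n) ℂ)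
    (hUt : Ut ∈ Matrix.unitaryGroup (Fin 2 × Fin n) ℂ)
    (A : Matrix (Fin n) (Fin n) ℂ)
    (hA : ∀ a b : Fin n, A a b = Ut (0, a) (0, b))
    (ZI : Matrix (Fin 2 × Fin n) (Fin 2 × Fin n) ℂ)
    (hZI : ∀ p q : Fin 2 × Fin n,
      ZI p q = if p = q then (if p.1 = 0 then 1 else -1) else 0)
    (C : Matrix (Fin 2 × Fin n) (Fin 2 × Fin n) ℂ)
    (hC : C = Utᴴ * ZI * Ut * ZI)
    -- singular value decomposition of `A`
    (ψb φb : Fin n → (Fin n → ℂ))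
    (hψb : ∀ l l' : Fin n, star (ψb l) ⬝ᵥ ψb l' = if l = l' then 1 else 0)
    (hφb : ∀ l l' : Fin n, star (φb l) ⬝ᵥ φb l' = if l = l' then 1 else 0)
    (lam θ : Fin n → ℝ)
    (hAφ : ∀ l : Fin n, A *ᵥ φb l = (lam l : ℂ) • ψb l)
    (hAψ : ∀ l : Fin n, Aᴴ *ᵥ ψb l = (lam l : ℂ) • φb l)
    (hlamθ : ∀ l : Fin n, lam l = Real.cos (θ l / 2))
    -- reference unit vector `ψ` and its overlaps `α_l`
    (ψ : Fin n → ℂ)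
    (v : Fin 2 × Fin n → ℂ)
    (hv : ∀ p : Fin 2 × Fin n, v p = if p.1 = 0 then ψ p.2 else 0)
    (α : Fin n → ℂ) (hα : ∀ l : Fin n, α l = star (φb l) ⬝ᵥ ψ)
    (k : ℕ) :
    star v ⬝ᵥ ((C ^ (2 * k)) *ᵥ v)
      = ((∑ l : Fin n, ‖α l‖ ^ 2 * Real.cos (2 * k * θ l) : ℝ) : ℂ)
    ∧ star v ⬝ᵥ ((C ^ (2 * k)) *ᵥ v)
      = ((∑ l : Fin n, ‖α l‖ ^ 2 *
          (Polynomial.Chebyshev.T ℝ (4 * k)).eval (lam l) : ℝ) : ℂ) := by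
  have hA : A = topBlock Ut := ext hA
  have hZI : ZI = pauliZKronOne (Fin n) := by ext p q; simp [hZI, pauliZKronOne, diagonal_apply]
  have hv : v = ketZero (∑ l, α l • φb l) := by
    rw [funext hα, ← eq_sum_dotProduct_smul_of_orthonormal hφb ψ]
    exact funext hv
  simp only [hlamθ, hA] at hAφ hAψ
  have hfourier : star v ⬝ᵥ ((C ^ (2 * k)) *ᵥ v)
      = ((∑ l : Fin n, ‖α l‖ ^ 2 * Real.cos (2 * k * θ l) : ℝ) : ℂ) := by
    rw [hC, hZI, ← conjPauliZ, hv, map_sum]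
    simp only [map_smul]
    rw [star_sum_smul_dotProduct_mulVec_sum_smul _
      (star_ketZero_dotProduct_echo_pow_mulVec_ketZero hUt hφb hψb hAφ hAψ (2 * k))]
    push_cast
    rfl
  refine ⟨hfourier, hfourier.trans ?_⟩
  congr 2 with l
  rw [hlamθ, Polynomial.Chebyshev.T_real_cos]
  push_cast
  ring_nf

/-- **OTOC as a Chebyshev polynomial transform** (Theorem 1).
For every integer `k ≥ 1` and every unit vector `ψ ∈ ℂⁿ`, the expectation value
`⟨(|0⟩⊗ψ), C^{2k} (|0⟩⊗ψ)⟩` equals `Σ_l |α_l|² cos(2k θ_l) = Σ_l |α_l|² T_{4k}(λ_l)`. -/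
theorem otoc_chebyshev_transform
    (n : ℕ) (hn : 1 ≤ n)
    (Ut : Matrix (Fin 2 × Fin n) (Fin 2 × Fin n) ℂ)
    (hUt : Ut ∈ Matrix.unitaryGroup (Fin 2 × Fin n) ℂ)
    (A : Matrix (Fin n) (Fin n) ℂ)
    (hA : ∀ a b : Fin n, A a b = Ut (0, a) (0, b))
    (ZI : Matrix (Fin 2 × Fin n) (Fin 2 × Fin n) ℂ)
    (hZI : ∀ p q : Fin 2 × Fin n,
      ZI p q = if p = q then (if p.1 = 0 then 1 else -1) else 0)
    (C : Matrix (Fin 2 × Fin n) (Fin 2 × Fin n) ℂ)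
    (hC : C = Utᴴ * ZI * Ut * ZI)
    -- singular value decomposition of `A`
    (ψb φb : Fin n → (Fin n → ℂ))
    (hψb : ∀ l l' : Fin n, star (ψb l) ⬝ᵥ ψb l' = if l = l' then 1 else 0)
    (hφb : ∀ l l' : Fin n, star (φb l) ⬝ᵥ φb l' = if l = l' then 1 else 0)
    (lam θ : Fin n → ℝ)
    (hAφ : ∀ l : Fin n, A *ᵥ φb l = (lam l : ℂ) • ψb l)
    (hAψ : ∀ l : Fin n, Aᴴ *ᵥ ψb l = (lam l : ℂ) • φb l)
    (hlam : ∀ l : Fin n, lam l ∈ Set.Icc (0 : ℝ) 1)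
    (hθ : ∀ l : Fin n, θ l ∈ Set.Icc (0 : ℝ) Real.pi)
    (hlamθ : ∀ l : Fin n, lam l = Real.cos (θ l / 2))
    -- reference unit vector `ψ` and its overlaps `α_l`
    (ψ : Fin n → ℂ) (hψ : star ψ ⬝ᵥ ψ = 1)
    (v : Fin 2 × Fin n → ℂ)
    (hv : ∀ p : Fin 2 × Fin n, v p = if p.1 = 0 then ψ p.2 else 0)
    (α : Fin n → ℂ) (hα : ∀ l : Fin n, α l = star (φb l) ⬝ᵥ ψ)
    (k : ℕ) (hk : 1 ≤ k) :
    star v ⬝ᵥ ((C ^ (2 * k)) *ᵥ v)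
      = ((∑ l : Fin n, ‖α l‖ ^ 2 * Real.cos (2 * k * θ l) : ℝ) : ℂ)
    ∧ star v ⬝ᵥ ((C ^ (2 * k)) *ᵥ v)
      = ((∑ l : Fin n, ‖α l‖ ^ 2 *
          (Polynomial.Chebyshev.T ℝ (4 * k)).eval (lam l) : ℝ) : ℂ) :=
  otoc_chebyshev_transform_general n Ut hUt A hA ZI hZI C hC ψb φb hψb hφb lam θ hAφ hAψ hlamθ ψ v
    hv α hα k
end

section
/- Let V be a finite-dimensional complex inner product space and let P and Q be orthogonal projections on V. Then V admits an orthogonal direct-sum decomposition V = ⊕_α V_α into subspaces V_α with dim V_α ≤ 2, each of which is invariant under both P and Q. (Jordan's two-projections lemma, underlying the qubitization structure of the echo operator.) -/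
/-!
Let `U` be a nonzero subspace invariant under both projections. If `P` vanishes on `U`, then
`span {v, Q v}` is invariant for any `v ∈ U`. Otherwise `P ∘ Q` preserves `U ⊓ range P` and has
an eigenvector `v` there; then `P v = v` and `P (Q v) = μ • v`, so again `span {v, Q v}` is
invariant. Since `P` and `Q` are self-adjoint, the orthogonal complement of this piece inside `U`
is invariant as well, and splitting off pieces of dimension at most `2` terminates.
-/

open Module Submodule

theorem IsIdempotentElem.span_pair_mem_invtSubmodule {K V : Type*} [Field K] [AddCommGroup V]
    [Module K V] {Q : End K V} (hQ : IsIdempotentElem Q) (v : V) :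
    span K {v, Q v} ∈ Q.invtSubmodule := by
  rw [End.mem_invtSubmodule, span_le]
  rintro _ (rfl | rfl)
  · exact subset_span (by simp)
  · simp only [SetLike.mem_coe, mem_comap, ← End.mul_apply, hQ.eq]
    exact subset_span (by simp)

namespace Module.End

variable {K V : Type*} [Field K] [IsAlgClosed K] [AddCommGroup V] [Module K V]
  [FiniteDimensional K V]

theorem exists_hasEigenvector_mem_of_mem_invtSubmodule {f : End K V} {U : Submodule K V}
    (hU : U ∈ f.invtSubmodule) (hU0 : U ≠ ⊥) :
    ∃ μ : K, ∃ v ∈ U, f.HasEigenvector μ v := by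
  have : Nontrivial U := nontrivial_iff_ne_bot.mpr hU0
  obtain ⟨μ, hμ⟩ := exists_eigenvalue (f.restrict hU)
  obtain ⟨v, hv⟩ := hμ.exists_hasEigenvector
  refine ⟨μ, v, v.2, hasEigenvector_iff.mpr ⟨?_, by simpa using hv.2⟩⟩
  exact mem_eigenspace_iff.mpr (congrArg Subtype.val hv.apply_eq_smul)

theorem exists_mem_ne_zero_apply_mem_span_pair {P Q : End K V} (hP : IsIdempotentElem P)
    {U : Submodule K V} (hUP : U ∈ P.invtSubmodule) (hUQ : U ∈ Q.invtSubmodule) (hU0 : U ≠ ⊥) :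
    ∃ v ∈ U, v ≠ 0 ∧ P v ∈ span K {v, Q v} ∧ P (Q v) ∈ span K {v, Q v} := by
  by_cases hUP0 : U ⊓ LinearMap.range P = ⊥
  · obtain ⟨v, hvU, hv0⟩ := exists_mem_ne_zero_of_ne_bot hU0
    have hP0 : ∀ x ∈ U, P x = 0 := fun x hx => by
      rw [← mem_bot K, ← hUP0]
      exact ⟨hUP hx, LinearMap.mem_range_self P x⟩
    exact ⟨v, hvU, hv0, by simp [hP0 v hvU], by simp [hP0 _ (hUQ hvU)]⟩
  · have hinv : U ⊓ LinearMap.range P ∈ invtSubmodule (P ∘ₗ Q) :=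
      invtSubmodule.inf_mem (invtSubmodule.comp P hUP hUQ) fun x _ => ⟨Q x, rfl⟩
    obtain ⟨μ, v, ⟨hvU, hvP⟩, hv⟩ := exists_hasEigenvector_mem_of_mem_invtSubmodule hinv hUP0
    refine ⟨v, hvU, hv.2, ?_, ?_⟩
    · rw [(LinearMap.IsIdempotentElem.mem_range_iff hP).mp hvP]
      exact subset_span (by simp)
    · rw [← LinearMap.comp_apply, hv.apply_eq_smul]
      exact smul_mem _ _ (subset_span (by simp))

theorem exists_mem_inf_invtSubmodule_le_finrank_le_two {P Q : End K V}
    (hP : IsIdempotentElem P) (hQ : IsIdempotentElem Q) {U : Submodule K V}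
    (hU : U ∈ P.invtSubmodule ⊓ Q.invtSubmodule) (hU0 : U ≠ ⊥) :
    ∃ W ∈ P.invtSubmodule ⊓ Q.invtSubmodule, W ≤ U ∧ W ≠ ⊥ ∧ finrank K W ≤ 2 := by
  classical
  obtain ⟨v, hvU, hv0, hPv, hPQv⟩ := exists_mem_ne_zero_apply_mem_span_pair hP hU.1 hU.2 hU0
  refine ⟨span K {v, Q v}, ⟨span_le.mpr ?_, hQ.span_pair_mem_invtSubmodule v⟩, ?_, ?_, ?_⟩
  · rintro _ (rfl | rfl)
    exacts [hPv, hPQv]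
  · rw [span_le]
    rintro _ (rfl | rfl)
    exacts [hvU, hU.2 hvU]
  · exact (Submodule.ne_bot_iff _).mpr ⟨v, subset_span (by simp), hv0⟩
  · exact (finrank_span_le_card _).trans (by simpa using Finset.card_le_two)

end Module.End

namespace Submodule

variable {𝕜 E : Type*} [RCLike 𝕜] [NormedAddCommGroup E] [InnerProductSpace 𝕜 E]
  [FiniteDimensional 𝕜 E] {L : Sublattice (Submodule 𝕜 E)} {p : Submodule 𝕜 E → Prop}

theorem exists_finset_pairwise_isOrtho_sSup_eq (hL : ∀ U ∈ L, Uᗮ ∈ L)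
    (h : ∀ U ∈ L, U ≠ ⊥ → ∃ W ∈ L, W ≤ U ∧ W ≠ ⊥ ∧ p W) {U : Submodule 𝕜 E} (hU : U ∈ L) :
    ∃ s : Finset (Submodule 𝕜 E), (s : Set (Submodule 𝕜 E)).Pairwise IsOrtho ∧
      sSup (s : Set (Submodule 𝕜 E)) = U ∧ ∀ W ∈ s, W ∈ L ∧ p W := by
  induction U using WellFoundedLT.induction with
  | _ U ih =>
  by_cases hU0 : U = ⊥
  · exact ⟨∅, by simp, by simp [hU0], by simp⟩
  obtain ⟨W, hWL, hWU, hW0, hpW⟩ := h U hU hU0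
  have hlt : Wᗮ ⊓ U < U := by
    refine inf_le_right.lt_of_ne fun heq => hW0 (eq_bot_iff.mpr ?_)
    rw [← inf_orthogonal_eq_bot W]
    exact le_inf le_rfl (hWU.trans (heq ▸ inf_le_left))
  obtain ⟨s, hs, hsup, hsL⟩ := ih _ hlt (L.inf_mem (hL W hWL) hU)
  have hWs : ∀ W' ∈ s, W' ⟂ W := fun W' hW' =>
    isOrtho_iff_le.mpr ((le_sSup hW').trans (hsup.le.trans inf_le_left))
  refine ⟨insert W s, ?_, ?_, ?_⟩
  · rw [Finset.coe_insert, Set.pairwise_insert]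
    exact ⟨hs, fun W' hW' _ => ⟨(hWs W' hW').symm, hWs W' hW'⟩⟩
  · rw [Finset.coe_insert, sSup_insert, hsup, sup_orthogonal_inf_of_hasOrthogonalProjection hWU]
  · simpa using ⟨⟨hWL, hpW⟩, hsL⟩

theorem exists_isInternal_pairwise_isOrtho (hL : ∀ U ∈ L, Uᗮ ∈ L) (hL_top : ⊤ ∈ L)
    (h : ∀ U ∈ L, U ≠ ⊥ → ∃ W ∈ L, W ≤ U ∧ W ≠ ⊥ ∧ p W) :
    ∃ (n : ℕ) (W : Fin n → Submodule 𝕜 E), DirectSum.IsInternal W ∧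
      Pairwise (fun i j => W i ⟂ W j) ∧ ∀ i, W i ∈ L ∧ p (W i) := by
  obtain ⟨s, hs, htop, hsL⟩ := exists_finset_pairwise_isOrtho_sSup_eq hL h hL_top
  set e := s.equivFin.symm
  have horth : Pairwise fun i j => (e i : Submodule 𝕜 E) ⟂ e j := fun i j hij =>
    hs (e i).2 (e j).2 (Subtype.coe_injective.ne (e.injective.ne hij))
  refine ⟨s.card, fun i => e i, ?_, horth, fun i => hsL _ (e i).2⟩
  have hsup : ⨆ i, (e i : Submodule 𝕜 E) = ⊤ := by
    rw [← htop, sSup_eq_iSup']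
    exact e.iSup_comp (g := Subtype.val)
  rw [OrthogonalFamily.isInternal_iff (orthogonalFamily_iff_pairwise.mpr horth), hsup,
    top_orthogonal_eq_bot]

end Submodule

/-- **Jordan's two-projections lemma.** If `P` and `Q` are orthogonal projections
(self-adjoint idempotents) on a finite-dimensional complex inner product space `V`,
then `V` admits an orthogonal direct-sum decomposition into subspaces of dimension
at most `2`, each invariant under both `P` and `Q`. -/
theorem jordan_two_projections
    (V : Type*) [NormedAddCommGroup V] [InnerProductSpace ℂ V]
    [FiniteDimensional ℂ V]
    (P Q : V →ₗ[ℂ] V)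
    (hP2 : P ∘ₗ P = P) (hQ2 : Q ∘ₗ Q = Q)
    (hPsa : ∀ x y : V, inner ℂ (P x) y = (inner ℂ x (P y) : ℂ))
    (hQsa : ∀ x y : V, inner ℂ (Q x) y = (inner ℂ x (Q y) : ℂ)) :
    ∃ (ι : Type) (_ : Fintype ι) (_ : DecidableEq ι) (W : ι → Submodule ℂ V),
      DirectSum.IsInternal W ∧
      (∀ a b : ι, a ≠ b → ∀ x ∈ W a, ∀ y ∈ W b, (inner ℂ x y : ℂ) = 0) ∧
      (∀ a : ι, Module.finrank ℂ (W a) ≤ 2) ∧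
      (∀ a : ι, ∀ x ∈ W a, P x ∈ W a ∧ Q x ∈ W a) := by
  have hP : P.IsSymmetric := hPsa
  have hQ : Q.IsSymmetric := hQsa
  obtain ⟨n, W, hint, horth, hW⟩ :=
    exists_isInternal_pairwise_isOrtho (L := End.invtSubmodule P ⊓ End.invtSubmodule Q)
      (p := fun W => finrank ℂ W ≤ 2)
      (fun U hU => ⟨hP.orthogonalComplement_mem_invtSubmodule hU.1,
        hQ.orthogonalComplement_mem_invtSubmodule hU.2⟩)
      ⟨End.invtSubmodule.top_mem P, End.invtSubmodule.top_mem Q⟩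
      (fun U hU hU0 => End.exists_mem_inf_invtSubmodule_le_finrank_le_two hP2 hQ2 hU hU0)
  exact ⟨Fin n, inferInstance, inferInstance, W, hint,
    fun a b hab => isOrtho_iff_inner_eq.mp (horth hab), fun a => (hW a).2,
    fun a x hx => ⟨(hW a).1.1 hx, (hW a).1.2 hx⟩⟩
end

section
/- The compression of the echo operator C to the range of the projection |0⟩⟨0| ⊗ I equals |0⟩⟨0| ⊗ (2A*A − I); that is, (|0⟩⟨0| ⊗ I) C (|0⟩⟨0| ⊗ I) = |0⟩⟨0| ⊗ (2A*A − I). In particular the eigenvalues of the compressed operator 2A*A − I on ℂⁿ are 2λ_l² − 1 = cos θ_l with eigenvectors φ_l. -/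
open Matrix Finset

/-- The compression of the echo operator `C` to the range of `|0⟩⟨0| ⊗ I` equals
`|0⟩⟨0| ⊗ (2A*A − I)`; in particular the eigenvalues of `2A*A − I` are
`2λ_l² − 1 = cos θ_l` with eigenvectors `φ_l`. -/
theorem echo_compression
    (n : ℕ) (hn : 1 ≤ n)
    (Ut : Matrix (Fin 2 × Fin n) (Fin 2 × Fin n) ℂ)
    (hUt : Ut ∈ Matrix.unitaryGroup (Fin 2 × Fin n) ℂ)
    (A : Matrix (Fin n) (Fin n) ℂ)
    (hA : ∀ a b : Fin n, A a b = Ut (0, a) (0, b))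
    (ZI : Matrix (Fin 2 × Fin n) (Fin 2 × Fin n) ℂ)
    (hZI : ∀ p q : Fin 2 × Fin n,
      ZI p q = if p = q then (if p.1 = 0 then 1 else -1) else 0)
    (C : Matrix (Fin 2 × Fin n) (Fin 2 × Fin n) ℂ)
    (hC : C = Utᴴ * ZI * Ut * ZI)
    -- singular value decomposition of `A`
    (ψb φb : Fin n → (Fin n → ℂ))
    (hψb : ∀ l l' : Fin n, star (ψb l) ⬝ᵥ ψb l' = if l = l' then 1 else 0)
    (hφb : ∀ l l' : Fin n, star (φb l) ⬝ᵥ φb l' = if l = l' then 1 else 0)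
    (lam θ : Fin n → ℝ)
    (hAφ : ∀ l : Fin n, A *ᵥ φb l = (lam l : ℂ) • ψb l)
    (hAψ : ∀ l : Fin n, Aᴴ *ᵥ ψb l = (lam l : ℂ) • φb l)
    (hlam : ∀ l : Fin n, lam l ∈ Set.Icc (0 : ℝ) 1)
    (hθ : ∀ l : Fin n, θ l ∈ Set.Icc (0 : ℝ) Real.pi)
    (hlamθ : ∀ l : Fin n, lam l = Real.cos (θ l / 2))
    -- the projection `|0⟩⟨0| ⊗ I`
    (P₀ : Matrix (Fin 2 × Fin n) (Fin 2 × Fin n) ℂ)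
    (hP₀ : ∀ p q : Fin 2 × Fin n,
      P₀ p q = if p.1 = 0 ∧ q.1 = 0 ∧ p.2 = q.2 then 1 else 0) :
    P₀ * C * P₀
      = Matrix.of (fun p q : Fin 2 × Fin n =>
          if p.1 = 0 ∧ q.1 = 0 then ((2 : ℂ) • (Aᴴ * A) - 1) p.2 q.2 else 0) ∧
    (∀ l : Fin n,
      ((2 : ℂ) • (Aᴴ * A) - 1) *ᵥ φb l = ((2 * lam l ^ 2 - 1 : ℝ) : ℂ) • φb l) ∧
    (∀ l : Fin n,
      ((2 : ℂ) • (Aᴴ * A) - 1) *ᵥ φb l = ((Real.cos (θ l) : ℝ) : ℂ) • φb l) := by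
  -- `ZI` and `P₀` are diagonal matrices
  set z : Fin 2 × Fin n → ℂ := fun p => if p.1 = 0 then 1 else -1 with hz
  have hZId : ZI = Matrix.diagonal z := by
    ext p q
    rw [hZI, Matrix.diagonal_apply]
  set d : Fin 2 × Fin n → ℂ := fun p => if p.1 = 0 then 1 else 0 with hd
  have hP₀d : P₀ = Matrix.diagonal d := by
    ext p q
    rw [hP₀, Matrix.diagonal_apply]
    by_cases h2 : p = q
    · subst h2
      by_cases h0 : p.1 = 0 <;> simp [hd, h0]
    · rw [if_neg h2, if_neg]
      rintro ⟨ha, hb, hc⟩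
      exact h2 (Prod.ext_iff.mpr ⟨ha.trans hb.symm, hc⟩)
  have hU1 : Utᴴ * Ut = 1 := Matrix.mem_unitaryGroup_iff'.mp hUt
  -- expansion of the middle factor
  have expand : ∀ x y : Fin 2 × Fin n,
      (Utᴴ * Matrix.diagonal z * Ut) x y
        = 2 * (∑ c : Fin n, (starRingEnd ℂ) (Ut (0, c) x) * Ut (0, c) y)
          - (Utᴴ * Ut) x y := by
    intro x y
    simp only [Matrix.mul_apply, Matrix.diagonal_apply, Matrix.conjTranspose_apply, mul_ite,
      mul_zero, ite_mul, zero_mul, Finset.sum_ite_eq', Finset.mem_univ, if_true, hz,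
      starRingEnd_apply]
    rw [Fintype.sum_prod_type, Fintype.sum_prod_type, Fin.sum_univ_two, Fin.sum_univ_two]
    norm_num
    ring
  -- key entry computation for C
  have key : ∀ a b : Fin n,
      C (0, a) (0, b) = ((2 : ℂ) • (Aᴴ * A) - 1) a b := by
    intro a b
    rw [hC, hZId, Matrix.mul_diagonal, expand, hU1]
    have hAA : (Aᴴ * A) a b
        = ∑ c : Fin n, (starRingEnd ℂ) (Ut (0, c) (0, a)) * Ut (0, c) (0, b) := by
      simp [Matrix.mul_apply, Matrix.conjTranspose_apply, hA]
    have hzb : z ((0 : Fin 2), b) = 1 := if_pos rfl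
    rw [hzb, mul_one, Matrix.sub_apply, Matrix.smul_apply, hAA, Matrix.one_apply,
      Matrix.one_apply, smul_eq_mul]
    congr 1
    simp [Prod.ext_iff]
  refine ⟨?_, ?_, ?_⟩
  · ext ⟨i, a⟩ ⟨j, b⟩
    rw [hP₀d, Matrix.mul_diagonal, Matrix.diagonal_mul, Matrix.of_apply]
    fin_cases i <;> fin_cases j <;> simp [hd, key]
  · intro l
    have hAA : (Aᴴ * A) *ᵥ φb l = ((lam l : ℂ) * (lam l : ℂ)) • φb l := by
      rw [← Matrix.mulVec_mulVec, hAφ, Matrix.mulVec_smul, hAψ, smul_smul]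
    rw [Matrix.sub_mulVec, Matrix.smul_mulVec, hAA, Matrix.one_mulVec]
    ext i
    simp only [Pi.sub_apply, Pi.smul_apply, smul_eq_mul, smul_smul]
    push_cast
    ring
  · intro l
    have h : ((2 * lam l ^ 2 - 1 : ℝ) : ℂ) = ((Real.cos (θ l) : ℝ) : ℂ) := by
      rw [hlamθ, show θ l = 2 * (θ l / 2) by ring, Real.cos_two_mul]
      push_cast
      ring_nf
    rw [← h]
    have hAA : (Aᴴ * A) *ᵥ φb l = ((lam l : ℂ) * (lam l : ℂ)) • φb l := by
      rw [← Matrix.mulVec_mulVec, hAφ, Matrix.mulVec_smul, hAψ, smul_smul]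
    rw [Matrix.sub_mulVec, Matrix.smul_mulVec, hAA, Matrix.one_mulVec]
    ext i
    simp only [Pi.sub_apply, Pi.smul_apply, smul_eq_mul, smul_smul]
    push_cast
    ring
end

section
/- Let U be a unitary operator on ℂ²_i ⊗ ℂ²_j ⊗ ℂ^m and suppose the Heisenberg-evolved projector factorizes at site i, i.e., U (|0_j⟩⟨0_j| ⊗ I) U* = I₂ ⊗ Q for some operator Q on ℂ²_j ⊗ ℂ^m (the outside-the-causal-cone condition). Then: (1) Q is an orthogonal projection of rank m; (2) the truncated propagator A := (⟨0_i| ⊗ I) U (|0_j⟩ ⊗ I) satisfies A A* = Q; and (3) the singular values of A lie in {0,1}, with exactly m singular values equal to 1 and m equal to 0 — the same bimodal spectrum as for U = Id. -/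
/-!
Let `V = U (|0_j⟩ ⊗ I)` be the columns of `U` on which qubit `j` is `0`. It is an isometry, so
`U P_j U* = V V*` is an orthogonal projection of trace `2m`. Factorized as `I₂ ⊗ Q`, it forces
`Q` to be a projection of trace, hence rank, `m`. The propagator `A` is the `⟨0_i|` block row of
`V`, so `A A*` is the `(0, 0)` block of `I₂ ⊗ Q`, which is `Q`; a rank-`m` projection on a
`2m`-dimensional space has eigenvalues in `{0, 1}` with both eigenspaces of dimension `m`.
-/

open Matrix Module
open scoped Kronecker

namespace LinearMap.IsIdempotentElem

variable {K V : Type*} [Field K] [AddCommGroup V] [Module K V] {f : End K V}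

theorem eq_zero_or_one_of_hasEigenvalue (hf : IsIdempotentElem f) {μ : K}
    (hμ : f.HasEigenvalue μ) : μ = 0 ∨ μ = 1 := by
  simpa using hf.spectrum_subset K hμ.mem_spectrum

theorem eigenspace_one (hf : IsIdempotentElem f) : f.eigenspace 1 = LinearMap.range f := by
  ext v
  rw [Module.End.mem_eigenspace_iff, one_smul, mem_range_iff hf]

variable [FiniteDimensional K V]

theorem trace_eq_finrank_range (hf : IsIdempotentElem f) :
    LinearMap.trace K V f = finrank K (LinearMap.range f) :=
  (isProj_range f hf).trace

end LinearMap.IsIdempotentElem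

namespace Matrix

section Idempotent

variable {K n : Type*} [Field K] [Fintype n]

theorem isIdempotentElem_mulVecLin {P : Matrix n n K} (hP : IsIdempotentElem P) :
    IsIdempotentElem P.mulVecLin := by
  rw [IsIdempotentElem, Module.End.mul_eq_comp, ← mulVecLin_mul, hP.eq]

theorem rank_add_finrank_eigenspace_zero (P : Matrix n n K) :
    P.rank + finrank K (Module.End.eigenspace P.mulVecLin 0) = Fintype.card n := by
  rw [Module.End.eigenspace_zero, rank, LinearMap.finrank_range_add_finrank_ker,
    Module.finrank_fintype_fun_eq_card]

variable [DecidableEq n]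

theorem rank_eq_trace_of_isIdempotentElem [CharZero K] {P : Matrix n n K}
    (hP : IsIdempotentElem P) : (P.rank : K) = P.trace := by
  rw [rank, ← LinearMap.IsIdempotentElem.trace_eq_finrank_range (isIdempotentElem_mulVecLin hP),
    ← toLin'_apply', trace_toLin'_eq]

end Idempotent

section Kronecker

variable {ι κ R : Type*} [DecidableEq ι] [CommSemiring R]

@[simp]
theorem submatrix_one_kronecker_prodMk (Q : Matrix κ κ R) (i : ι) :
    ((1 : Matrix ι ι R) ⊗ₖ Q).submatrix (Prod.mk i) (Prod.mk i) = Q := by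
  ext x y
  simp

theorem isIdempotentElem_of_one_kronecker [Fintype ι] [Fintype κ] [Nonempty ι]
    {Q : Matrix κ κ R} (h : IsIdempotentElem ((1 : Matrix ι ι R) ⊗ₖ Q)) : IsIdempotentElem Q := by
  obtain ⟨i⟩ := ‹Nonempty ι›
  have := congrArg (submatrix · (Prod.mk i) (Prod.mk i)) h.eq
  show Q * Q = Q
  simpa [← mul_kronecker_mul] using this

end Kronecker

section Isometry

variable {ι κ R : Type*} [CommRing R] [StarRing R]

theorem submatrix_mul_conjTranspose_submatrix {l : Type*} [Fintype κ] (M : Matrix ι κ R)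
    (r : l → ι) :
    M.submatrix r id * (M.submatrix r id)ᴴ = (M * Mᴴ).submatrix r r := by
  rw [conjTranspose_submatrix, ← submatrix_mul _ _ _ _ _ Function.bijective_id]

variable [Fintype ι]

theorem isIdempotentElem_mul_conjTranspose [Fintype κ] [DecidableEq κ] {V : Matrix ι κ R}
    (hV : Vᴴ * V = 1) : IsIdempotentElem (V * Vᴴ) := by
  rw [IsIdempotentElem, Matrix.mul_assoc, ← Matrix.mul_assoc Vᴴ, hV, Matrix.one_mul]

theorem trace_mul_conjTranspose [Fintype κ] [DecidableEq κ] {V : Matrix ι κ R}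
    (hV : Vᴴ * V = 1) : (V * Vᴴ).trace = Fintype.card κ := by
  rw [trace_mul_comm, hV, trace_one]

theorem conjTranspose_mul_self_submatrix [DecidableEq ι] [DecidableEq κ] {U : Matrix ι ι R}
    (hU : U ∈ unitaryGroup ι R) {g : κ → ι} (hg : Function.Injective g) :
    (U.submatrix id g)ᴴ * U.submatrix id g = 1 := by
  rw [conjTranspose_submatrix, ← submatrix_mul _ _ _ _ _ Function.bijective_id,
    ← star_eq_conjTranspose, mem_unitaryGroup_iff'.mp hU, submatrix_one _ hg]

variable [Fintype κ]

theorem mul_submatrix_one_mul_conjTranspose_mul [DecidableEq ι] (U : Matrix ι ι R) (g : κ → ι) :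
    let J := (1 : Matrix ι ι R).submatrix id g
    U * (J * Jᴴ) * Uᴴ = U.submatrix id g * (U.submatrix id g)ᴴ := by
  have hUJ : U * (1 : Matrix ι ι R).submatrix id g = U.submatrix id g :=
    mul_submatrix_one (Equiv.refl _) g U
  simp only [← hUJ, conjTranspose_mul, Matrix.mul_assoc]

theorem mul_conjTranspose_one_submatrix_apply {β : Type*} [DecidableEq ι] [DecidableEq β]
    [DecidableEq κ] (b : β) (p q : ι × β × κ) :
    let J := (1 : Matrix (ι × β × κ) (ι × β × κ) R).submatrix id fun x : ι × κ => (x.1, b, x.2)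
    (J * Jᴴ) p q = if p.1 = q.1 ∧ p.2.1 = b ∧ q.2.1 = b ∧ p.2.2 = q.2.2 then 1 else 0 := by
  obtain ⟨a, c, x⟩ := p
  obtain ⟨a', c', x'⟩ := q
  simp only [mul_apply, conjTranspose_apply, submatrix_apply, one_apply, Prod.mk.injEq, id_eq]
  simp [Fintype.sum_prod_type, ite_and]
  split_ifs <;> simp_all

end Isometry

end Matrix

theorem outside_causal_cone_bimodal_general
    (m : ℕ)
    (U : Matrix (Fin 2 × Fin 2 × Fin m) (Fin 2 × Fin 2 × Fin m) ℂ)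
    (hU : U ∈ Matrix.unitaryGroup (Fin 2 × Fin 2 × Fin m) ℂ)
    -- the projector `P_j = |0_j⟩⟨0_j| ⊗ I` on the full space
    (Pj : Matrix (Fin 2 × Fin 2 × Fin m) (Fin 2 × Fin 2 × Fin m) ℂ)
    (hPj : ∀ p q : Fin 2 × Fin 2 × Fin m,
      Pj p q = if p.1 = q.1 ∧ p.2.1 = 0 ∧ q.2.1 = 0 ∧ p.2.2 = q.2.2 then 1 else 0)
    -- the factorization hypothesis `U P_j U* = I₂ ⊗ Q` (outside the causal cone)
    (Q : Matrix (Fin 2 × Fin m) (Fin 2 × Fin m) ℂ)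
    (hQ : ∀ (a : Fin 2) (b : Fin 2) (x : Fin m) (a' : Fin 2) (b' : Fin 2) (x' : Fin m),
      (U * Pj * Uᴴ) (a, b, x) (a', b', x')
        = if a = a' then Q (b, x) (b', x') else 0)
    -- the truncated propagator
    (A : Matrix (Fin 2 × Fin m) (Fin 2 × Fin m) ℂ)
    (hA : ∀ (b : Fin 2) (y : Fin m) (a : Fin 2) (x : Fin m),
      A (b, y) (a, x) = U ((0 : Fin 2), b, y) (a, (0 : Fin 2), x)) :
    (Qᴴ = Q ∧ Q * Q = Q ∧ Q.rank = m) ∧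
    A * Aᴴ = Q ∧
    ((∀ μ : ℂ, Module.End.HasEigenvalue (Matrix.mulVecLin (A * Aᴴ)) μ →
        μ = 0 ∨ μ = 1) ∧
      Module.finrank ℂ (Module.End.eigenspace (Matrix.mulVecLin (A * Aᴴ)) 1) = m ∧
      Module.finrank ℂ (Module.End.eigenspace (Matrix.mulVecLin (A * Aᴴ)) 0) = m) := by
  set g : Fin 2 × Fin m → Fin 2 × Fin 2 × Fin m := fun x => (x.1, 0, x.2)
  set V := U.submatrix id g
  have hV : Vᴴ * V = 1 := conjTranspose_mul_self_submatrix hU fun x y h => by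
    simpa [g, Prod.ext_iff] using h
  have hPV : U * Pj * Uᴴ = V * Vᴴ := by
    convert mul_submatrix_one_mul_conjTranspose_mul U g
    ext p q
    rw [hPj, mul_conjTranspose_one_submatrix_apply]
  have hR : U * Pj * Uᴴ = 1 ⊗ₖ Q := by
    ext ⟨a, b, x⟩ ⟨a', b', x'⟩
    rw [hQ, kroneckerMap_apply, one_apply]
    split_ifs <;> simp
  have hAA : A * Aᴴ = Q := by
    have hA' : A = V.submatrix (Prod.mk 0) id := by
      ext ⟨b, y⟩ ⟨a, x⟩
      exact hA b y a x
    rw [hA', submatrix_mul_conjTranspose_submatrix, ← hPV, hR, submatrix_one_kronecker_prodMk]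
  have hQQ : IsIdempotentElem Q := by
    have h := isIdempotentElem_mul_conjTranspose hV
    rw [← hPV, hR] at h
    exact isIdempotentElem_of_one_kronecker h
  have hrank : Q.rank = m := by
    have h := congrArg trace (hR.symm.trans hPV)
    rw [trace_kronecker, trace_one, trace_mul_conjTranspose hV] at h
    have htrace : Q.trace = m := by simpa [Fintype.card_prod] using h
    exact_mod_cast (rank_eq_trace_of_isIdempotentElem hQQ).trans htrace
  have hT := isIdempotentElem_mulVecLin hQQ
  refine ⟨⟨by rw [← hAA, conjTranspose_mul, conjTranspose_conjTranspose], hQQ.eq, hrank⟩, hAA,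
    ?_, ?_, ?_⟩ <;> rw [hAA]
  · exact fun μ => LinearMap.IsIdempotentElem.eq_zero_or_one_of_hasEigenvalue hT
  · rwa [LinearMap.IsIdempotentElem.eigenspace_one hT]
  · have h := rank_add_finrank_eigenspace_zero Q
    simp only [hrank, Fintype.card_prod, Fintype.card_fin] at h
    omega

/-- **Outside the causal cone.** If the Heisenberg-evolved projector factorizes
at site `i`, i.e. `U (|0_j⟩⟨0_j| ⊗ I) U* = I₂ ⊗ Q`, then `Q` is an orthogonal
projection of rank `m`, the truncated propagator satisfies `A A* = Q`, and the
singular values of `A` lie in `{0,1}` with exactly `m` ones and `m` zeros — the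
same bimodal spectrum as for `U = Id`. -/
theorem outside_causal_cone_bimodal
    (m : ℕ) (hm : 1 ≤ m)
    (U : Matrix (Fin 2 × Fin 2 × Fin m) (Fin 2 × Fin 2 × Fin m) ℂ)
    (hU : U ∈ Matrix.unitaryGroup (Fin 2 × Fin 2 × Fin m) ℂ)
    -- the projector `P_j = |0_j⟩⟨0_j| ⊗ I` on the full space
    (Pj : Matrix (Fin 2 × Fin 2 × Fin m) (Fin 2 × Fin 2 × Fin m) ℂ)
    (hPj : ∀ p q : Fin 2 × Fin 2 × Fin m,
      Pj p q = if p.1 = q.1 ∧ p.2.1 = 0 ∧ q.2.1 = 0 ∧ p.2.2 = q.2.2 then 1 else 0)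
    -- the factorization hypothesis `U P_j U* = I₂ ⊗ Q` (outside the causal cone)
    (Q : Matrix (Fin 2 × Fin m) (Fin 2 × Fin m) ℂ)
    (hQ : ∀ (a : Fin 2) (b : Fin 2) (x : Fin m) (a' : Fin 2) (b' : Fin 2) (x' : Fin m),
      (U * Pj * Uᴴ) (a, b, x) (a', b', x')
        = if a = a' then Q (b, x) (b', x') else 0)
    -- the truncated propagator
    (A : Matrix (Fin 2 × Fin m) (Fin 2 × Fin m) ℂ)
    (hA : ∀ (b : Fin 2) (y : Fin m) (a : Fin 2) (x : Fin m),
      A (b, y) (a, x) = U ((0 : Fin 2), b, y) (a, (0 : Fin 2), x)) :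
    (Qᴴ = Q ∧ Q * Q = Q ∧ Q.rank = m) ∧
    A * Aᴴ = Q ∧
    ((∀ μ : ℂ, Module.End.HasEigenvalue (Matrix.mulVecLin (A * Aᴴ)) μ →
        μ = 0 ∨ μ = 1) ∧
      Module.finrank ℂ (Module.End.eigenspace (Matrix.mulVecLin (A * Aᴴ)) 1) = m ∧
      Module.finrank ℂ (Module.End.eigenspace (Matrix.mulVecLin (A * Aᴴ)) 0) = m) :=
  outside_causal_cone_bimodal_general m U hU Pj hPj Q hQ A hA
end

section
/- Suppose every singular value λ_l of A lies in {0,1} (the bimodal spectrum occurring outside the causal cone). Then for every unit vector ψ ∈ ℂⁿ, the TOC value satisfies ⟨(|0⟩⊗ψ), C (|0⟩⊗ψ)⟩ = Σ_{l : λ_l = 1} |α_l|² − Σ_{l : λ_l = 0} |α_l|² = 2 Σ_{l : λ_l = 1} |α_l|² − 1; i.e., the contributions of the two peaks at phase θ = 0 and θ = π enter the first Fourier harmonic with opposite signs and cancel when the two peaks carry equal weight. -/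
open Matrix Finset

/-- If every singular value of `A` lies in `{0,1}`, the TOC value equals
`Σ_{l : λ_l = 1} |α_l|² − Σ_{l : λ_l = 0} |α_l|² = 2 Σ_{l : λ_l = 1} |α_l|² − 1`:
the two peaks at phase `θ = 0` and `θ = π` enter the first Fourier harmonic with
opposite signs. -/
theorem toc_bimodal_cancellation
    (n : ℕ) (hn : 1 ≤ n)
    (Ut : Matrix (Fin 2 × Fin n) (Fin 2 × Fin n) ℂ)
    (hUt : Ut ∈ Matrix.unitaryGroup (Fin 2 × Fin n) ℂ)
    (A : Matrix (Fin n) (Fin n) ℂ)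
    (hA : ∀ a b : Fin n, A a b = Ut (0, a) (0, b))
    (ZI : Matrix (Fin 2 × Fin n) (Fin 2 × Fin n) ℂ)
    (hZI : ∀ p q : Fin 2 × Fin n,
      ZI p q = if p = q then (if p.1 = 0 then 1 else -1) else 0)
    (C : Matrix (Fin 2 × Fin n) (Fin 2 × Fin n) ℂ)
    (hC : C = Utᴴ * ZI * Ut * ZI)
    -- singular value decomposition of `A`
    (ψb φb : Fin n → (Fin n → ℂ))
    (hψb : ∀ l l' : Fin n, star (ψb l) ⬝ᵥ ψb l' = if l = l' then 1 else 0)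
    (hφb : ∀ l l' : Fin n, star (φb l) ⬝ᵥ φb l' = if l = l' then 1 else 0)
    (lam : Fin n → ℝ)
    (hAφ : ∀ l : Fin n, A *ᵥ φb l = (lam l : ℂ) • ψb l)
    (hAψ : ∀ l : Fin n, Aᴴ *ᵥ ψb l = (lam l : ℂ) • φb l)
    -- bimodal singular spectrum
    (hbimodal : ∀ l : Fin n, lam l = 0 ∨ lam l = 1)
    -- reference unit vector and overlaps
    (ψ : Fin n → ℂ) (hψ : star ψ ⬝ᵥ ψ = 1)
    (v : Fin 2 × Fin n → ℂ)
    (hv : ∀ p : Fin 2 × Fin n, v p = if p.1 = 0 then ψ p.2 else 0)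
    (α : Fin n → ℂ) (hα : ∀ l : Fin n, α l = star (φb l) ⬝ᵥ ψ) :
    star v ⬝ᵥ (C *ᵥ v)
      = ((∑ l ∈ Finset.univ.filter (fun l : Fin n => lam l = 1), ‖α l‖ ^ 2
          - ∑ l ∈ Finset.univ.filter (fun l : Fin n => lam l = 0), ‖α l‖ ^ 2 : ℝ) : ℂ)
    ∧ star v ⬝ᵥ (C *ᵥ v)
      = ((2 * ∑ l ∈ Finset.univ.filter (fun l : Fin n => lam l = 1), ‖α l‖ ^ 2
          - 1 : ℝ) : ℂ) := by
  classical
  have h10 : ¬((1 : Fin 2) = 0) := by decide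
  have hUt1 : Utᴴ * Ut = 1 := by
    have := hUt.1
    simpa [Matrix.star_eq_conjTranspose] using this
  set u := Ut *ᵥ v with hu
  have hv0 : ∀ a : Fin n, v (0, a) = ψ a := fun a => by rw [hv]; simp
  have hv1 : ∀ a : Fin n, v ((1 : Fin 2), a) = 0 := fun a => by rw [hv]; simp [h10]
  -- ZI fixes v
  have hZIv : ZI *ᵥ v = v := by
    funext p
    simp only [Matrix.mulVec, dotProduct]
    rw [Finset.sum_eq_single p]
    · rw [hZI]
      by_cases h : p.1 = 0
      · simp [h]
      · rw [if_pos rfl, if_neg h, hv p, if_neg h]; ring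
    · intro q _ hq; rw [hZI, if_neg (Ne.symm hq), zero_mul]
    · intro h; exact absurd (Finset.mem_univ p) h
  -- the TOC equals ⟨u, ZI u⟩
  have key : star v ⬝ᵥ (C *ᵥ v) = star u ⬝ᵥ (ZI *ᵥ u) := by
    rw [hC]
    have : (Utᴴ * ZI * Ut * ZI) *ᵥ v = Utᴴ *ᵥ (ZI *ᵥ u) := by
      rw [Matrix.mul_assoc, Matrix.mul_assoc, ← Matrix.mulVec_mulVec,
        ← Matrix.mulVec_mulVec, ← Matrix.mulVec_mulVec, hZIv, hu]
    rw [this, Matrix.dotProduct_mulVec, ← Matrix.star_mulVec, hu]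
  -- ZI action on u
  have hZIu : ∀ p : Fin 2 × Fin n, (ZI *ᵥ u) p = (if p.1 = 0 then 1 else -1) * u p := by
    intro p
    simp only [Matrix.mulVec, dotProduct]
    rw [Finset.sum_eq_single p]
    · rw [hZI, if_pos rfl]
    · intro q _ hq; rw [hZI, if_neg (Ne.symm hq), zero_mul]
    · intro h; exact absurd (Finset.mem_univ p) h
  set T0 : ℝ := ∑ a, ‖u (0, a)‖ ^ 2 with hT0def
  set T1 : ℝ := ∑ a, ‖u (1, a)‖ ^ 2 with hT1def
  have hsq : ∀ z : ℂ, star z * z = ((‖z‖ ^ 2 : ℝ) : ℂ) := by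
    intro z
    rw [mul_comm]
    push_cast
    exact Complex.mul_conj' z
  have huZI : star u ⬝ᵥ (ZI *ᵥ u) = ((T0 - T1 : ℝ) : ℂ) := by
    have expand : star u ⬝ᵥ (ZI *ᵥ u)
        = (∑ a, ((‖u (0, a)‖ ^ 2 : ℝ) : ℂ)) - ∑ a, ((‖u (1, a)‖ ^ 2 : ℝ) : ℂ) := by
      simp only [dotProduct, Pi.star_apply, hZIu]
      rw [Fintype.sum_prod_type, Fin.sum_univ_two]
      have s0 : ∀ a : Fin n, star (u (0, a)) *
          ((if ((0 : Fin 2), a).1 = 0 then (1 : ℂ) else -1) * u (0, a))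
          = ((‖u (0, a)‖ ^ 2 : ℝ) : ℂ) := fun a => by
        rw [if_pos rfl, one_mul, hsq]
      have s1 : ∀ a : Fin n, star (u ((1 : Fin 2), a)) *
          ((if ((1 : Fin 2), a).1 = 0 then (1 : ℂ) else -1) * u ((1 : Fin 2), a))
          = -((‖u ((1 : Fin 2), a)‖ ^ 2 : ℝ) : ℂ) := fun a => by
        rw [if_neg h10, neg_one_mul, mul_neg, hsq]
      rw [Finset.sum_congr rfl fun a _ => s0 a, Finset.sum_congr rfl fun a _ => s1 a]
      rw [Finset.sum_neg_distrib]
      ring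
    rw [expand, hT0def, hT1def]
    push_cast
    ring
  -- unit norm of u
  have hvv : star v ⬝ᵥ v = 1 := by
    rw [← hψ]
    simp only [dotProduct, Pi.star_apply]
    rw [Fintype.sum_prod_type, Fin.sum_univ_two]
    simp [hv0, hv1]
  have huu : star u ⬝ᵥ u = 1 := by
    rw [hu, Matrix.star_mulVec, Matrix.dotProduct_mulVec, Matrix.vecMul_vecMul,
      hUt1, Matrix.vecMul_one, hvv]
  have hT01 : T0 + T1 = 1 := by
    have expand : star u ⬝ᵥ u
        = (∑ a, ((‖u (0, a)‖ ^ 2 : ℝ) : ℂ)) + ∑ a, ((‖u (1, a)‖ ^ 2 : ℝ) : ℂ) := by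
      simp only [dotProduct, Pi.star_apply]
      rw [Fintype.sum_prod_type, Fin.sum_univ_two]
      rw [Finset.sum_congr rfl fun a _ => hsq (u (0, a)),
        Finset.sum_congr rfl fun a _ => hsq (u ((1 : Fin 2), a))]
    have : (1 : ℂ) = ((T0 + T1 : ℝ) : ℂ) := by
      rw [← huu, expand, hT0def, hT1def]; push_cast; ring
    exact_mod_cast this.symm
  -- top block of u is A ψ
  have hu0 : ∀ a : Fin n, u (0, a) = (A *ᵥ ψ) a := by
    intro a
    show (Ut *ᵥ v) (0, a) = (A *ᵥ ψ) a
    simp only [Matrix.mulVec, dotProduct, Fintype.sum_prod_type, Fin.sum_univ_two]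
    simp [hv0, hv1, hA]
  -- completeness of the φ basis
  set P : Matrix (Fin n) (Fin n) ℂ := Matrix.of (fun l j => star (φb l j)) with hP
  have hPP : P * Pᴴ = 1 := by
    ext l l'
    have := hφb l l'
    simp only [dotProduct, Pi.star_apply] at this
    simp only [Matrix.mul_apply, Matrix.conjTranspose_apply, hP, Matrix.of_apply,
      star_star, Matrix.one_apply]
    exact this
  have hPhP : Pᴴ * P = 1 := mul_eq_one_comm.mp hPP
  have hαP : ∀ l, (P *ᵥ ψ) l = α l := by
    intro l
    rw [hα]
    simp [Matrix.mulVec, dotProduct, hP]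
  have hψexp : ∀ j, ψ j = ∑ l, α l * φb l j := by
    intro j
    have h1 : Pᴴ *ᵥ (P *ᵥ ψ) = ψ := by
      rw [Matrix.mulVec_mulVec, hPhP, Matrix.one_mulVec]
    calc ψ j = (Pᴴ *ᵥ (P *ᵥ ψ)) j := (congrFun h1 j).symm
      _ = ∑ l, star (P l j) * (P *ᵥ ψ) l := by
          simp [Matrix.mulVec, dotProduct, Matrix.conjTranspose_apply]
      _ = ∑ l, α l * φb l j := by
          refine Finset.sum_congr rfl fun l _ => ?_
          rw [hαP l, hP]
          simp [mul_comm]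
  -- A ψ in the ψ basis
  have hAψexp : ∀ a, (A *ᵥ ψ) a = ∑ l, (α l * (lam l : ℂ)) * ψb l a := by
    intro a
    have : (A *ᵥ ψ) a = ∑ b, A a b * ψ b := rfl
    rw [this]
    calc ∑ b, A a b * ψ b = ∑ b, ∑ l, α l * (A a b * φb l b) := by
          refine Finset.sum_congr rfl fun b _ => ?_
          rw [hψexp b, Finset.mul_sum]
          exact Finset.sum_congr rfl fun l _ => by ring
      _ = ∑ l, ∑ b, α l * (A a b * φb l b) := Finset.sum_comm
      _ = ∑ l, (α l * (lam l : ℂ)) * ψb l a := by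
          refine Finset.sum_congr rfl fun l _ => ?_
          rw [← Finset.mul_sum]
          have : ∑ b, A a b * φb l b = (lam l : ℂ) * ψb l a := by
            have := congrFun (hAφ l) a
            simpa [Matrix.mulVec, dotProduct] using this
          rw [this]; ring
  -- spectral formula for T0
  have hT0spec : (T0 : ℂ) = ((∑ l, ‖α l‖ ^ 2 * (lam l) ^ 2 : ℝ) : ℂ) := by
    have e1 : (T0 : ℂ) = ∑ a, star ((A *ᵥ ψ) a) * (A *ᵥ ψ) a := by
      rw [hT0def]
      push_cast
      refine Finset.sum_congr rfl fun a _ => ?_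
      rw [← hu0 a, hsq]
      push_cast; ring
    rw [e1]
    have e2 : ∑ a, star ((A *ᵥ ψ) a) * (A *ᵥ ψ) a
        = ∑ a, ∑ l, ∑ l', (star (α l * (lam l : ℂ)) * (α l' * (lam l' : ℂ)))
            * (star (ψb l a) * ψb l' a) := by
      refine Finset.sum_congr rfl fun a _ => ?_
      rw [hAψexp a, star_sum]
      rw [Finset.sum_mul_sum]
      refine Finset.sum_congr rfl fun l _ => Finset.sum_congr rfl fun l' _ => ?_
      simp only [star_mul']
      ring
    rw [e2, Finset.sum_comm]
    have e3 : ∀ l : Fin n, ∑ a, ∑ l', (star (α l * (lam l : ℂ)) * (α l' * (lam l' : ℂ)))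
            * (star (ψb l a) * ψb l' a)
        = ((‖α l‖ ^ 2 * (lam l) ^ 2 : ℝ) : ℂ) := by
      intro l
      rw [Finset.sum_comm]
      have e4 : ∀ l' : Fin n, ∑ a, (star (α l * (lam l : ℂ)) * (α l' * (lam l' : ℂ)))
            * (star (ψb l a) * ψb l' a)
          = (star (α l * (lam l : ℂ)) * (α l' * (lam l' : ℂ)))
            * (if l = l' then 1 else 0) := by
        intro l'
        rw [← Finset.mul_sum, ← hψb l l']
        rfl
      rw [Finset.sum_congr rfl fun l' _ => e4 l']
      simp only [mul_ite, mul_one, mul_zero]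
      rw [Finset.sum_ite_eq]
      simp only [Finset.mem_univ, if_true]
      rw [hsq]
      rw [norm_mul, mul_pow, Complex.norm_real, Real.norm_eq_abs, sq_abs]
    rw [Finset.sum_congr rfl fun l _ => e3 l]
    push_cast
    ring_nf
  -- reduce the spectral sum using bimodality
  set S1 : ℝ := ∑ l ∈ Finset.univ.filter (fun l : Fin n => lam l = 1), ‖α l‖ ^ 2 with hS1def
  set S0 : ℝ := ∑ l ∈ Finset.univ.filter (fun l : Fin n => lam l = 0), ‖α l‖ ^ 2 with hS0def
  have hspec : ∑ l, ‖α l‖ ^ 2 * (lam l) ^ 2 = S1 := by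
    rw [hS1def, Finset.sum_filter]
    refine Finset.sum_congr rfl fun l _ => ?_
    rcases hbimodal l with h | h <;> simp [h]
  have hT0S1 : T0 = S1 := by
    have : ((T0 : ℝ) : ℂ) = ((S1 : ℝ) : ℂ) := by rw [hT0spec, hspec]
    exact_mod_cast this
  -- Parseval
  have hpars : ∑ l, ‖α l‖ ^ 2 = 1 := by
    have hc : ((∑ l, ‖α l‖ ^ 2 : ℝ) : ℂ) = 1 := by
      have e : star (P *ᵥ ψ) ⬝ᵥ (P *ᵥ ψ) = 1 := by
        rw [Matrix.star_mulVec, Matrix.dotProduct_mulVec, Matrix.vecMul_vecMul,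
          hPhP, Matrix.vecMul_one, hψ]
      have e2 : star (P *ᵥ ψ) ⬝ᵥ (P *ᵥ ψ) = ((∑ l, ‖α l‖ ^ 2 : ℝ) : ℂ) := by
        simp only [dotProduct, Pi.star_apply]
        push_cast
        refine Finset.sum_congr rfl fun l _ => ?_
        rw [hαP l, hsq]
        push_cast; ring
      rw [← e2, e]
    exact_mod_cast hc
  have hfilter : Finset.univ.filter (fun l : Fin n => lam l = 0)
      = Finset.univ.filter (fun l : Fin n => ¬ lam l = 1) := by
    ext l
    simp only [Finset.mem_filter, Finset.mem_univ, true_and]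
    constructor
    · intro h h1; rw [h] at h1; exact one_ne_zero h1.symm
    · intro h; rcases hbimodal l with h0 | h1
      · exact h0
      · exact absurd h1 h
  have hS01 : S1 + S0 = 1 := by
    rw [hS0def, hS1def, hfilter, Finset.sum_filter_add_sum_filter_not]
    exact hpars
  have hT1S : T1 = 1 - S1 := by
    have := hT01; rw [hT0S1] at this; linarith
  constructor
  · rw [key, huZI]
    have : T0 - T1 = S1 - S0 := by rw [hT0S1, hT1S]; linarith
    rw [this]
  · rw [key, huZI]
    have : T0 - T1 = 2 * S1 - 1 := by rw [hT0S1, hT1S]; ring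
    rw [this]
end

section
/- Fix an integer d ≥ 1 and real phases β_0, α_1, β_1, …, α_d, β_d. For θ ∈ ℝ let R(θ) := e^{−i(θ/2)Y} ∈ M₂(ℂ) and define the single-qubit QSP product M(θ) := e^{−iβ_0 Z} · Π_{r=1}^{d} [ R(θ)* e^{−iα_r Z} R(θ) e^{−iβ_r Z} ]. Then there exists a polynomial P ∈ ℂ[x] of degree at most 2d such that for all θ ∈ ℝ, ⟨0| M(θ) |0⟩ = P(cos(θ/2)). (The depth-d generalized echo sequence implements a degree-2d polynomial transformation of λ = cos(θ/2).) -/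
/-!
With `c = cos(θ/2)` and `s = sin(θ/2)`, the matrix `R(θ)ᴴ e^{−iaZ} R(θ)` has diagonal entries
that are quadratic polynomials in `c` (using `s² = 1 − c²`), and off-diagonal entries equal to
`s c` times a constant. Conjugating by `diag(1, s)` makes it a polynomial matrix in `c` whose
`(i, j)` entry has degree at most `2 + wᵢ − wⱼ` for the weights `w = (0, 1)`; the conjugation is
expressed as an intertwining relation, so nothing breaks where `s = 0`. Such weighted degree
bounds add up under matrix multiplication, and the `(0, 0)` entry is unchanged by the conjugation,
so `⟨0|M(θ)|0⟩` is a polynomial of degree at most `2d` in `c`.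
-/

open Matrix Polynomial

noncomputable def pauliY : Matrix (Fin 2) (Fin 2) ℂ :=
  !![0, -Complex.I; Complex.I, 0]

/-- `e^{−i(θ/2)Y} = cos(θ/2)·I − i sin(θ/2)·Y`. -/
noncomputable def Ry (θ : ℝ) : Matrix (Fin 2) (Fin 2) ℂ :=
  (Real.cos (θ / 2) : ℂ) • (1 : Matrix (Fin 2) (Fin 2) ℂ)
    - (Complex.I * (Real.sin (θ / 2) : ℂ)) • pauliY

/-- `e^{−iαZ} = diag(e^{−iα}, e^{iα})`. -/
noncomputable def Rz (α : ℝ) : Matrix (Fin 2) (Fin 2) ℂ :=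
  !![Complex.exp (-(α : ℂ) * Complex.I), 0; 0, Complex.exp ((α : ℂ) * Complex.I)]

/-- The ordered product `term d * term (d-1) * ⋯ * term 1`
(the factor with `r = 1` rightmost, `r` increasing from right to left). -/
noncomputable def qspProd (term : ℕ → Matrix (Fin 2) (Fin 2) ℂ) :
    ℕ → Matrix (Fin 2) (Fin 2) ℂ
  | 0 => 1
  | d + 1 => term (d + 1) * qspProd term d

namespace Matrix

def WeightedDegreeLE {ι R : Type*} [Semiring R] (w : ι → ℕ) (n : ℕ) (M : Matrix ι ι R[X]) :
    Prop :=
  ∀ i j, (M i j).degree + w j ≤ n + w i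

variable {ι R : Type*} [Semiring R] {w : ι → ℕ} {m n : ℕ} {M N : Matrix ι ι R[X]}

theorem WeightedDegreeLE.mul [Fintype ι] (hM : M.WeightedDegreeLE w m)
    (hN : N.WeightedDegreeLE w n) : (M * N).WeightedDegreeLE w (m + n) := by
  intro i j
  refine Finset.sum_induction _ (fun p : R[X] => p.degree + w j ≤ ↑(m + n) + w i)
    (fun p q hp hq => ?_) (by simp) (fun k _ => ?_)
  · grw [degree_add_le, ← max_add_add_right]
    exact max_le hp hq
  · rw [← WithBot.add_le_add_iff_right (WithBot.coe_ne_bot (a := w k))]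
    calc (M i k * N k j).degree + w j + w k
        ≤ ((M i k).degree + w k) + ((N k j).degree + w j) := by
          grw [degree_mul_le]; exact le_of_eq (by ac_rfl)
      _ ≤ (m + w i) + (n + w k) := add_le_add (hM i k) (hN k j)
      _ = ↑(m + n) + w i + w k := by push_cast; ring

theorem weightedDegreeLE_diagonal_C [DecidableEq ι] (w : ι → ℕ) (v : ι → R) :
    (diagonal fun i => C (v i)).WeightedDegreeLE w 0 := by
  intro i j
  rcases eq_or_ne i j with rfl | hij
  · simpa using add_le_add_left (degree_C_le (a := v i)) (w i : WithBot ℕ)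
  · simp [diagonal_apply_ne _ hij]

end Matrix

open Matrix

/-- `A θ` is conjugate, through the intertwiner `diag(1, sin(θ/2))`, to a polynomial matrix in
`cos(θ/2)` whose `(i, j)` entry has degree at most `n + wᵢ − wⱼ`, where `w = (0, 1)`. -/
def IsHalfAnglePoly (n : ℕ) (A : ℝ → Matrix (Fin 2) (Fin 2) ℂ) : Prop :=
  ∃ M : Matrix (Fin 2) (Fin 2) ℂ[X], M.WeightedDegreeLE ![0, 1] n ∧
    ∀ θ : ℝ, diagonal ![1, (Real.sin (θ / 2) : ℂ)] * A θ =
      M.map (evalRingHom (Real.cos (θ / 2) : ℂ)) * diagonal ![1, (Real.sin (θ / 2) : ℂ)]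

namespace IsHalfAnglePoly

variable {m n : ℕ} {A B : ℝ → Matrix (Fin 2) (Fin 2) ℂ}

theorem mul (hA : IsHalfAnglePoly m A) (hB : IsHalfAnglePoly n B) :
    IsHalfAnglePoly (m + n) fun θ => A θ * B θ := by
  obtain ⟨M, hM, hMA⟩ := hA
  obtain ⟨N, hN, hNB⟩ := hB
  refine ⟨M * N, hM.mul hN, fun θ => ?_⟩
  rw [Matrix.map_mul, ← Matrix.mul_assoc, hMA, Matrix.mul_assoc, hNB, Matrix.mul_assoc]

theorem diagonal (v : Fin 2 → ℂ) : IsHalfAnglePoly 0 fun _ => diagonal v := by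
  refine ⟨Matrix.diagonal fun i => C (v i), weightedDegreeLE_diagonal_C _ v, fun θ => ?_⟩
  rw [diagonal_map (map_zero _), diagonal_mul_diagonal, diagonal_mul_diagonal]
  simp [mul_comm]

theorem qspProd {term : ℝ → ℕ → Matrix (Fin 2) (Fin 2) ℂ}
    (h : ∀ r, IsHalfAnglePoly n fun θ => term θ r) (d : ℕ) :
    IsHalfAnglePoly (n * d) fun θ => _root_.qspProd (term θ) d := by
  induction d with
  | zero => simpa [_root_.qspProd] using IsHalfAnglePoly.diagonal 1
  | succ d ih => simpa [_root_.qspProd, Nat.mul_succ, add_comm] using (h (d + 1)).mul ih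

theorem exists_apply_zero_zero (hA : IsHalfAnglePoly n A) :
    ∃ P : ℂ[X], P.natDegree ≤ n ∧ ∀ θ : ℝ, A θ 0 0 = P.eval (Real.cos (θ / 2) : ℂ) := by
  obtain ⟨M, hM, hMA⟩ := hA
  refine ⟨M 0 0, natDegree_le_iff_degree_le.mpr (by simpa using hM 0 0), fun θ => ?_⟩
  simpa using congr_fun₂ (hMA θ) 0 0

end IsHalfAnglePoly

theorem Ry_eq (θ : ℝ) :
    Ry θ = !![(Real.cos (θ / 2) : ℂ), -Real.sin (θ / 2); Real.sin (θ / 2), Real.cos (θ / 2)] := by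
  ext i j
  fin_cases i <;> fin_cases j <;> simp [Ry, pauliY, mul_right_comm _ _ Complex.I]

theorem Rz_eq_diagonal (a : ℝ) :
    Rz a = diagonal ![Complex.exp (-a * Complex.I), Complex.exp (a * Complex.I)] := by
  simp [Rz, diagonal_fin_two]

theorem isHalfAnglePoly_Rz (a : ℝ) : IsHalfAnglePoly 0 fun _ => Rz a := by
  simpa only [Rz_eq_diagonal] using IsHalfAnglePoly.diagonal _

theorem isHalfAnglePoly_conjTranspose_Ry_mul_diagonal_mul_Ry (e f : ℂ) :
    IsHalfAnglePoly 2 fun θ => (Ry θ)ᴴ * diagonal ![e, f] * Ry θ := by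
  refine ⟨!![C e * X ^ 2 + C f * (1 - X ^ 2), C (f - e) * X;
    C (f - e) * X * (1 - X ^ 2), C e * (1 - X ^ 2) + C f * X ^ 2], ?_, fun θ => ?_⟩
  · have h00 : (C e * X ^ 2 + C f * (1 - X ^ 2)).degree ≤ 2 := by compute_degree
    have h01 : (C (f - e) * X).degree ≤ 1 := by compute_degree
    have h10 : (C (f - e) * X * (1 - X ^ 2)).degree ≤ 3 := by compute_degree
    have h11 : (C e * (1 - X ^ 2) + C f * X ^ 2).degree ≤ 2 := by compute_degree
    intro i j
    fin_cases i <;> fin_cases j <;> simp only [of_apply, cons_val', cons_val_zero, cons_val_one,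
      empty_val', cons_val_fin_one, Fin.zero_eta, Fin.mk_one]
    · grw [h00]; rfl
    · grw [h01]; rfl
    · grw [h10]; rfl
    · grw [h11]; rfl
  · have h : (Real.sin (θ / 2) : ℂ) ^ 2 + (Real.cos (θ / 2) : ℂ) ^ 2 = 1 := by
      exact_mod_cast Real.sin_sq_add_cos_sq _
    simp only [Ry_eq]
    generalize Real.sin (θ / 2) = s, Real.cos (θ / 2) = c at *
    ext i j
    fin_cases i <;> fin_cases j <;>
      simp only [mul_apply, Fin.sum_univ_two, conjTranspose_apply, RCLike.star_def,
        Complex.conj_ofReal, map_neg, diagonal_apply_eq, diagonal_apply_ne, ne_eq, one_ne_zero,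
        zero_ne_one, not_false_eq_true, map_apply, coe_evalRingHom, eval_add, eval_sub,
        eval_mul, eval_pow, eval_C, eval_X, eval_one, of_apply, cons_val', cons_val_fin_one,
        cons_val_zero, cons_val_one, Fin.isValue, Fin.zero_eta, Fin.mk_one]
    · linear_combination f * h
    · ring
    · linear_combination (f - e) * (c : ℂ) * h
    · linear_combination e * (s : ℂ) * h

theorem qsp_product_polynomial_general
    (d : ℕ) (β : ℕ → ℝ) (α : ℕ → ℝ) :
    ∃ P : Polynomial ℂ, P.natDegree ≤ 2 * d ∧
      ∀ θ : ℝ,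
        (Rz (β 0) *
          qspProd (fun r => (Ry θ)ᴴ * Rz (α r) * Ry θ * Rz (β r)) d) 0 0
          = P.eval ((Real.cos (θ / 2) : ℂ)) := by
  have hterm (r : ℕ) : IsHalfAnglePoly 2 fun θ => (Ry θ)ᴴ * Rz (α r) * Ry θ * Rz (β r) := by
    simpa only [Rz_eq_diagonal] using
      (isHalfAnglePoly_conjTranspose_Ry_mul_diagonal_mul_Ry _ _).mul (isHalfAnglePoly_Rz (β r))
  simpa using ((isHalfAnglePoly_Rz (β 0)).mul (.qspProd hterm d)).exists_apply_zero_zero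

/-- **QSP products implement polynomials of `cos(θ/2)`.** For any depth `d ≥ 1`
and phases `β_0, α_1, β_1, …, α_d, β_d`, there is a polynomial `P` of degree at
most `2d` with `⟨0| M(θ) |0⟩ = P(cos(θ/2))` for all `θ`, where
`M(θ) = e^{−iβ_0 Z} Π_{r=1}^d [R(θ)* e^{−iα_r Z} R(θ) e^{−iβ_r Z}]` and
`R(θ) = e^{−i(θ/2)Y}`. -/
theorem qsp_product_polynomial
    (d : ℕ) (hd : 1 ≤ d) (β : ℕ → ℝ) (α : ℕ → ℝ) :
    ∃ P : Polynomial ℂ, P.natDegree ≤ 2 * d ∧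
      ∀ θ : ℝ,
        (Rz (β 0) *
          qspProd (fun r => (Ry θ)ᴴ * Rz (α r) * Ry θ * Rz (β r)) d) 0 0
          = P.eval ((Real.cos (θ / 2) : ℂ)) :=
  qsp_product_polynomial_general d β α
end

section
/- For every integer m ≥ 1 and every unit vector ψ ∈ ℂⁿ, the value ⟨(|0⟩⊗ψ), C^m (|0⟩⊗ψ)⟩ equals Σ_{l=1}^{n} |α_l|² cos(m θ_l); in particular it is a real number and lies in the interval [−1,1]. (All powers of the echo operator, hence all OTOC^{(k)} and the TOC, yield real expectation values bounded by 1 in modulus in the reference state |0⟩⊗ψ.) -/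
open Matrix Finset

/-- Coefficient sequences for the action of the echo operator on the
invariant 2-plane spanned by `x l` and `z l`. -/
def echoCoeff (lam : ℝ) : ℕ → ℝ × ℝ
  | 0 => (1, 0)
  | m+1 => (-(echoCoeff lam m).1 - 2*lam*(echoCoeff lam m).2,
            2*lam*(echoCoeff lam m).1 + (4*lam^2-1)*(echoCoeff lam m).2)

lemma echoCoeff_c (lam θ : ℝ) (h : lam = Real.cos (θ/2)) (m : ℕ) :
    (echoCoeff lam m).1 + lam * (echoCoeff lam m).2 = Real.cos (m * θ) := by
  have hcos : 2*lam^2 - 1 = Real.cos θ := by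
    have h2 : Real.cos (2*(θ/2)) = 2 * Real.cos (θ/2)^2 - 1 := Real.cos_two_mul _
    rw [show 2*(θ/2) = θ by ring] at h2
    rw [h, ← h2]
  have hrec : ∀ a : ℝ, Real.cos ((a+2)*θ) = 2*Real.cos θ*Real.cos ((a+1)*θ) - Real.cos (a*θ) := by
    intro a
    have h1 : (a+2)*θ = (a+1)*θ + θ := by ring
    have h2 : a*θ = (a+1)*θ - θ := by ring
    rw [h1, h2, Real.cos_add, Real.cos_sub]
    ring
  have key : ∀ k : ℕ,
      ((echoCoeff lam k).1 + lam*(echoCoeff lam k).2 = Real.cos ((k : ℝ) * θ)) ∧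
      ((echoCoeff lam (k+1)).1 + lam*(echoCoeff lam (k+1)).2 = Real.cos (((k+1 : ℕ) : ℝ) * θ)) := by
    intro k
    induction k with
    | zero =>
      constructor
      · simp [echoCoeff]
      · simp only [echoCoeff]
        push_cast
        rw [one_mul, ← hcos]
        ring
    | succ j ih =>
      refine ⟨ih.2, ?_⟩
      have e1 := ih.1
      have e2 := ih.2
      push_cast at e1 e2 ⊢
      rw [show ((j:ℝ)+1+1)*θ = ((j:ℝ)+2)*θ by ring, hrec (j:ℝ), ← e1, ← e2, ← hcos]
      simp only [echoCoeff]
      ring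
  exact (key m).1

/-- For every `m ≥ 1` and unit vector `ψ`, `⟨(|0⟩⊗ψ), C^m (|0⟩⊗ψ)⟩ =
Σ_l |α_l|² cos(m θ_l)`; in particular the value is real and lies in `[−1,1]`. -/
theorem echo_powers_real_bounded
    (n : ℕ) (hn : 1 ≤ n)
    (Ut : Matrix (Fin 2 × Fin n) (Fin 2 × Fin n) ℂ)
    (hUt : Ut ∈ Matrix.unitaryGroup (Fin 2 × Fin n) ℂ)
    (A : Matrix (Fin n) (Fin n) ℂ)
    (hA : ∀ a b : Fin n, A a b = Ut (0, a) (0, b))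
    (ZI : Matrix (Fin 2 × Fin n) (Fin 2 × Fin n) ℂ)
    (hZI : ∀ p q : Fin 2 × Fin n,
      ZI p q = if p = q then (if p.1 = 0 then 1 else -1) else 0)
    (C : Matrix (Fin 2 × Fin n) (Fin 2 × Fin n) ℂ)
    (hC : C = Utᴴ * ZI * Ut * ZI)
    -- singular value decomposition of `A`
    (ψb φb : Fin n → (Fin n → ℂ))
    (hψb : ∀ l l' : Fin n, star (ψb l) ⬝ᵥ ψb l' = if l = l' then 1 else 0)
    (hφb : ∀ l l' : Fin n, star (φb l) ⬝ᵥ φb l' = if l = l' then 1 else 0)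
    (lam θ : Fin n → ℝ)
    (hAφ : ∀ l : Fin n, A *ᵥ φb l = (lam l : ℂ) • ψb l)
    (hAψ : ∀ l : Fin n, Aᴴ *ᵥ ψb l = (lam l : ℂ) • φb l)
    (hlam : ∀ l : Fin n, lam l ∈ Set.Icc (0 : ℝ) 1)
    (hθ : ∀ l : Fin n, θ l ∈ Set.Icc (0 : ℝ) Real.pi)
    (hlamθ : ∀ l : Fin n, lam l = Real.cos (θ l / 2))
    -- reference unit vector and overlaps
    (ψ : Fin n → ℂ) (hψ : star ψ ⬝ᵥ ψ = 1)
    (v : Fin 2 × Fin n → ℂ)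
    (hv : ∀ p : Fin 2 × Fin n, v p = if p.1 = 0 then ψ p.2 else 0)
    (α : Fin n → ℂ) (hα : ∀ l : Fin n, α l = star (φb l) ⬝ᵥ ψ)
    (m : ℕ) (hm : 1 ≤ m) :
    star v ⬝ᵥ ((C ^ m) *ᵥ v)
      = ((∑ l : Fin n, ‖α l‖ ^ 2 * Real.cos (m * θ l) : ℝ) : ℂ)
    ∧ (star v ⬝ᵥ ((C ^ m) *ᵥ v)).im = 0
    ∧ (star v ⬝ᵥ ((C ^ m) *ᵥ v)).re ∈ Set.Icc (-1 : ℝ) 1 := by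
  -- basic unitarity facts
  have hU2 : Ut * Utᴴ = 1 := by
    have := (Matrix.mem_unitaryGroup_iff).mp hUt
    rwa [Matrix.star_eq_conjTranspose] at this
  have hU1 : Utᴴ * Ut = 1 := mul_eq_one_comm.mp hU2
  -- ZI is diagonal
  have hZId : ZI = Matrix.diagonal (fun p : Fin 2 × Fin n => if p.1 = 0 then (1:ℂ) else -1) := by
    ext p q
    rw [hZI, Matrix.diagonal_apply]
  have hZImv : ∀ (u : Fin 2 × Fin n → ℂ) (p : Fin 2 × Fin n),
      (ZI *ᵥ u) p = (if p.1 = 0 then (1:ℂ) else -1) * u p := by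
    intro u p
    rw [hZId, Matrix.mulVec_diagonal]
  -- the vectors x l = |0⟩⊗φ_l, w l = |0⟩⊗ψ_l, z l = U† w l
  set x : Fin n → (Fin 2 × Fin n → ℂ) :=
    fun l p => if p.1 = 0 then φb l p.2 else 0 with hxd
  set w : Fin n → (Fin 2 × Fin n → ℂ) :=
    fun l p => if p.1 = 0 then ψb l p.2 else 0 with hwd
  set z : Fin n → (Fin 2 × Fin n → ℂ) := fun l => Utᴴ *ᵥ w l with hzd
  have hZIx : ∀ l, ZI *ᵥ x l = x l := by
    intro l; funext p
    rw [hZImv]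
    rcases p with ⟨i, j⟩
    fin_cases i <;> simp [hxd]
  have hZIw : ∀ l, ZI *ᵥ w l = w l := by
    intro l; funext p
    rw [hZImv]
    rcases p with ⟨i, j⟩
    fin_cases i <;> simp [hwd]
  -- the 0-block of z l is lam l • φb l
  have hZ0 : ∀ l j, z l (0, j) = (lam l : ℂ) * φb l j := by
    intro l j
    have h := congrFun (hAψ l) j
    simp only [Matrix.mulVec, dotProduct, Matrix.conjTranspose_apply, hA,
      Pi.smul_apply, smul_eq_mul] at h
    simp only [hzd, Matrix.mulVec, dotProduct, Matrix.conjTranspose_apply,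
      Fintype.sum_prod_type, Fin.sum_univ_two, hwd]
    simpa using h
  -- 0-block of Ut *ᵥ x l is lam l • ψb l
  have hUx0 : ∀ l j, (Ut *ᵥ x l) (0, j) = (lam l : ℂ) * ψb l j := by
    intro l j
    have h := congrFun (hAφ l) j
    simp only [Matrix.mulVec, dotProduct, hA, Pi.smul_apply, smul_eq_mul] at h
    simp only [Matrix.mulVec, dotProduct, Fintype.sum_prod_type, Fin.sum_univ_two, hxd]
    simpa using h
  have hZIz : ∀ l, ZI *ᵥ z l = (2*(lam l : ℂ)) • x l - z l := by
    intro l; funext p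
    rw [Pi.sub_apply, Pi.smul_apply, hZImv]
    rcases p with ⟨i, j⟩
    fin_cases i
    · simp only [hxd]
      simp [hZ0 l j]
      ring
    · simp [hxd]
  have hZIUx : ∀ l, ZI *ᵥ (Ut *ᵥ x l) = (2*(lam l : ℂ)) • w l - Ut *ᵥ x l := by
    intro l; funext p
    rw [Pi.sub_apply, Pi.smul_apply, hZImv]
    rcases p with ⟨i, j⟩
    fin_cases i
    · simp only [hwd]
      simp [hUx0 l j]
      ring
    · simp [hwd]
  have hUz : ∀ l, Ut *ᵥ z l = w l := by
    intro l
    rw [hzd]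
    rw [Matrix.mulVec_mulVec, hU2, Matrix.one_mulVec]
  -- action of C on x l and z l
  have hCx : ∀ l, C *ᵥ x l = (2*(lam l : ℂ)) • z l - x l := by
    intro l
    have : C *ᵥ x l = Utᴴ *ᵥ (ZI *ᵥ (Ut *ᵥ (ZI *ᵥ x l))) := by
      rw [hC]; rw [← Matrix.mulVec_mulVec, ← Matrix.mulVec_mulVec, ← Matrix.mulVec_mulVec]
    rw [this, hZIx, hZIUx, Matrix.mulVec_sub, Matrix.mulVec_smul,
      Matrix.mulVec_mulVec, hU1, Matrix.one_mulVec]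
  have hCz : ∀ l, C *ᵥ z l = ((4*(lam l:ℂ)^2 - 1)) • z l - (2*(lam l : ℂ)) • x l := by
    intro l
    have : C *ᵥ z l = Utᴴ *ᵥ (ZI *ᵥ (Ut *ᵥ (ZI *ᵥ z l))) := by
      rw [hC]; rw [← Matrix.mulVec_mulVec, ← Matrix.mulVec_mulVec, ← Matrix.mulVec_mulVec]
    rw [this, hZIz, Matrix.mulVec_sub, Matrix.mulVec_smul, hUz,
      Matrix.mulVec_sub, Matrix.mulVec_smul, hZIUx, hZIw,
      Matrix.mulVec_sub, Matrix.mulVec_smul, Matrix.mulVec_sub, Matrix.mulVec_smul,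
      Matrix.mulVec_mulVec, hU1, Matrix.one_mulVec]
    have hz' : Utᴴ *ᵥ w l = z l := rfl
    rw [hz']
    funext p
    simp only [Pi.sub_apply, Pi.smul_apply, smul_eq_mul]
    ring
  -- powers of C on x l
  have hpow : ∀ (k : ℕ) l, (C^k) *ᵥ x l
      = ((echoCoeff (lam l) k).1 : ℂ) • x l + ((echoCoeff (lam l) k).2 : ℂ) • z l := by
    intro k
    induction k with
    | zero =>
      intro l
      simp [echoCoeff, Matrix.one_mulVec]
    | succ j ih =>
      intro l
      rw [pow_succ', ← Matrix.mulVec_mulVec, ih l, Matrix.mulVec_add,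
        Matrix.mulVec_smul, Matrix.mulVec_smul, hCx, hCz]
      funext p
      simp only [echoCoeff, Pi.add_apply, Pi.sub_apply, Pi.smul_apply, smul_eq_mul]
      push_cast
      ring
  -- completeness of the orthonormal family φb
  have hcomp : ∀ i j : Fin n,
      (∑ l, (starRingEnd ℂ) (φb l i) * φb l j) = if i = j then (1:ℂ) else 0 := by
    set M : Matrix (Fin n) (Fin n) ℂ := Matrix.of (fun l j => φb l j) with hMd
    have hMMH : M * Mᴴ = 1 := by
      ext l l'
      have h := hφb l' l
      simp only [dotProduct, Pi.star_apply] at h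
      simp only [Matrix.mul_apply, Matrix.conjTranspose_apply, hMd, Matrix.of_apply,
        Matrix.one_apply]
      rw [Finset.sum_congr rfl (fun j _ => mul_comm (φb l j) (star (φb l' j))), h]
      simp [eq_comm]
    have hMHM := mul_eq_one_comm.mp hMMH
    intro i j
    have h := Matrix.ext_iff.mpr hMHM i j
    simpa [Matrix.mul_apply, Matrix.conjTranspose_apply, hMd, Matrix.one_apply] using h
  -- decomposition of v in terms of x l
  have hvx : v = ∑ l, α l • x l := by
    funext p
    rcases p with ⟨i, j⟩
    fin_cases i
    · have hstep : ∑ l, (∑ i, (starRingEnd ℂ) (φb l i) * ψ i) * φb l j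
          = ∑ i, (∑ l, (starRingEnd ℂ) (φb l i) * φb l j) * ψ i := by
        simp_rw [Finset.sum_mul]
        rw [Finset.sum_comm]
        exact Finset.sum_congr rfl fun i _ => Finset.sum_congr rfl fun l _ => by ring
      simp only [Finset.sum_apply, Pi.smul_apply, smul_eq_mul, hα, dotProduct,
        Pi.star_apply, hxd, hv]
      norm_num
      rw [hstep]
      simp only [hcomp]
      simp
    · simp [hxd, hv]
  -- overlaps
  have hvxl : ∀ l, star v ⬝ᵥ x l = star (α l) := by
    intro l
    rw [hα]
    simp only [dotProduct, Pi.star_apply, Fintype.sum_prod_type, Fin.sum_univ_two,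
      hxd, hv, star_sum, star_mul', star_star]
    simp [mul_comm]
  have hvzl : ∀ l, star v ⬝ᵥ z l = (lam l : ℂ) * star (α l) := by
    intro l
    have hL : star v ⬝ᵥ z l = ∑ j, star (ψ j) * ((lam l : ℂ) * φb l j) := by
      simp only [dotProduct, Pi.star_apply, Fintype.sum_prod_type, Fin.sum_univ_two, hv]
      simp [hZ0]
    rw [hL, hα]
    simp only [dotProduct, Pi.star_apply, star_sum, star_mul', star_star, Finset.mul_sum]
    apply Finset.sum_congr rfl
    intro j _
    ring
  -- conjugate pairing
  have hmc : ∀ l, α l * star (α l) = ((‖α l‖^2 : ℝ) : ℂ) := by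
    intro l
    rw [show star (α l) = (starRingEnd ℂ) (α l) from rfl, Complex.mul_conj']
    push_cast
    ring
  -- expansion of C^m v
  have hlin : (C^m) *ᵥ v = ∑ l, α l • ((C^m) *ᵥ x l) := by
    rw [hvx, ← Matrix.mulVecLin_apply, map_sum]
    simp [Matrix.mulVecLin_apply, Matrix.mulVec_smul]
  have hdot : ∀ (u : Fin n → (Fin 2 × Fin n → ℂ)),
      star v ⬝ᵥ (∑ l, u l) = ∑ l, star v ⬝ᵥ u l := by
    intro u
    simp only [dotProduct, Finset.sum_apply, Finset.mul_sum]
    rw [Finset.sum_comm]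
  -- the main identity
  have hterm : ∀ l, star v ⬝ᵥ (α l • ((C^m) *ᵥ x l))
      = ((‖α l‖ ^ 2 * Real.cos (m * θ l) : ℝ) : ℂ) := by
    intro l
    have hcc : ((echoCoeff (lam l) m).1 : ℂ) + (lam l : ℂ) * ((echoCoeff (lam l) m).2 : ℂ)
        = ((Real.cos (m * θ l) : ℝ) : ℂ) := by
      rw [← echoCoeff_c (lam l) (θ l) (hlamθ l) m]
      push_cast
      ring
    rw [dotProduct_smul, hpow m l, dotProduct_add, dotProduct_smul, dotProduct_smul,
      hvxl, hvzl]
    have hm := hmc l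
    simp only [smul_eq_mul]
    linear_combination (norm := (push_cast; ring1))
      (((echoCoeff (lam l) m).1 : ℂ) + (lam l : ℂ) * ((echoCoeff (lam l) m).2 : ℂ)) * hm
        + ((‖α l‖^2 : ℝ) : ℂ) * hcc
  have hmain : star v ⬝ᵥ ((C ^ m) *ᵥ v)
      = ((∑ l : Fin n, ‖α l‖ ^ 2 * Real.cos (m * θ l) : ℝ) : ℂ) := by
    rw [hlin, hdot, Complex.ofReal_sum]
    exact Finset.sum_congr rfl fun l _ => hterm l
  -- the total weight is 1
  have hsum1 : ∑ l, ‖α l‖ ^ 2 = 1 := by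
    have hvv : star v ⬝ᵥ v = 1 := by
      have h := hψ
      simp only [dotProduct, Pi.star_apply] at h
      simp only [dotProduct, Pi.star_apply, Fintype.sum_prod_type, Fin.sum_univ_two, hv]
      simpa using h
    have hvv2 : star v ⬝ᵥ v = ((∑ l, ‖α l‖ ^ 2 : ℝ) : ℂ) := by
      nth_rewrite 2 [hvx]
      rw [hdot, Complex.ofReal_sum]
      apply Finset.sum_congr rfl
      intro l _
      rw [dotProduct_smul, hvxl, smul_eq_mul, hmc l]
    have : ((∑ l, ‖α l‖ ^ 2 : ℝ) : ℂ) = ((1 : ℝ) : ℂ) := by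
      rw [← hvv2, hvv]; norm_num
    exact_mod_cast this
  -- bound
  have hbound : |∑ l, ‖α l‖ ^ 2 * Real.cos (m * θ l)| ≤ 1 := by
    have h1 := Finset.abs_sum_le_sum_abs
      (fun l => ‖α l‖ ^ 2 * Real.cos (m * θ l)) (Finset.univ : Finset (Fin n))
    have h2 : ∑ l, |‖α l‖ ^ 2 * Real.cos (m * θ l)| ≤ ∑ l, ‖α l‖ ^ 2 := by
      apply Finset.sum_le_sum
      intro l _
      rw [abs_mul, abs_of_nonneg (by positivity : (0:ℝ) ≤ ‖α l‖ ^ 2)]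
      nlinarith [Real.abs_cos_le_one ((m : ℝ) * θ l), sq_nonneg (‖α l‖)]
    linarith
  refine ⟨hmain, by rw [hmain, Complex.ofReal_im], ?_⟩
  rw [hmain]
  simp only [Complex.ofReal_re]
  exact Set.mem_Icc.mpr (abs_le.mp hbound)
end
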